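/- arXiv:2109.02585 — 13 statements merged into one kernel-verified Lean document; each statement's English description precedes it below -/
import Mathlib

section
/- Let T be a pretriangulated category, let (A, B, C, u, v, w) and (A', B', C', u', v', w') be distinguished triangles, and let a : A → A' and b : B → B' be morphisms with b ∘ u = u' ∘ a. If Hom_T(A, C'⟦-1⟧) = 0, then there exists a unique morphism c : C → C' such that (a, b, c) is a morphism of distinguished triangles. (The uniqueness statement (BBD, Proposition 1.1.9) used repeatedly in Section 3 of the paper.) -/
/-!
Existence is axiom TR3. For uniqueness, the difference `d` of two extensions satisfies
`v ≫ d = 0`, so by exactness of `Hom(-, C')` on the triangle it factors as `w ≫ e` with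
`e : A⟦1⟧ ⟶ C'`; by adjunction `Hom(A⟦1⟧, C') ≃ Hom(A, C'⟦-1⟧) = 0`, so `e = 0`.
-/

open CategoryTheory CategoryTheory.Limits CategoryTheory.Pretriangulated

lemma CategoryTheory.hom_from_shift_one_eq_zero {C : Type*} [Category C] [HasZeroMorphisms C]
    [HasShift C ℤ] {X Y : C} (hXY : ∀ φ : X ⟶ Y⟦(-1 : ℤ)⟧, φ = 0) (f : X⟦(1 : ℤ)⟧ ⟶ Y) :
    f = 0 :=
  let e := (shiftEquiv C (1 : ℤ)).toAdjunction.homEquiv X Y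
  e.injective ((hXY (e f)).trans (hXY (e 0)).symm)

namespace CategoryTheory.Pretriangulated.Triangle

-- Unqualified, `shiftFunctor` would resolve to `Triangle.shiftFunctor` in this namespace.
variable {C : Type*} [Category C] [Preadditive C] [HasZeroObject C] [HasShift C ℤ]
  [∀ n : ℤ, (CategoryTheory.shiftFunctor C n).Additive] [Pretriangulated C]

lemma hom_ext_of_mor₂_comp_eq {T : Triangle C} (hT : T ∈ distTriang C) {Y : C}
    (hY : ∀ φ : T.obj₁ ⟶ Y⟦(-1 : ℤ)⟧, φ = 0) {c c' : T.obj₃ ⟶ Y}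
    (h : T.mor₂ ≫ c = T.mor₂ ≫ c') : c = c' := by
  obtain ⟨f, hf⟩ := T.yoneda_exact₃ hT (c - c') (by rw [Preadditive.comp_sub, h, sub_self])
  rw [← sub_eq_zero, hf, hom_from_shift_one_eq_zero hY f, comp_zero]

end CategoryTheory.Pretriangulated.Triangle

/-- BBD, Proposition 1.1.9: a commutative square between the first morphisms of two
distinguished triangles extends to a morphism of triangles, uniquely if
Hom(A, C'⟦-1⟧) = 0. -/
theorem unique_extension_of_triangle_morphism
    (T : Type*) [Category T] [Preadditive T] [HasZeroObject T] [HasBinaryBiproducts T]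
    [HasShift T ℤ] [∀ n : ℤ, (shiftFunctor T n).Additive] [Pretriangulated T]
    (A B C A' B' C' : T)
    (u : A ⟶ B) (v : B ⟶ C) (w : C ⟶ A⟦(1:ℤ)⟧)
    (u' : A' ⟶ B') (v' : B' ⟶ C') (w' : C' ⟶ A'⟦(1:ℤ)⟧)
    (hT : Triangle.mk u v w ∈ distTriang T)
    (hT' : Triangle.mk u' v' w' ∈ distTriang T)
    (a : A ⟶ A') (b : B ⟶ B') (hcomm : u ≫ b = a ≫ u')
    (hzero : ∀ φ : A ⟶ C'⟦(-1:ℤ)⟧, φ = 0) :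
    ∃! c : C ⟶ C', v ≫ c = b ≫ v' ∧ w ≫ a⟦(1:ℤ)⟧' = c ≫ w' := by
  obtain ⟨c, hc⟩ := complete_distinguished_triangle_morphism _ _ hT hT' a b hcomm
  exact ⟨c, hc, fun c' hc' => Triangle.hom_ext_of_mor₂_comp_eq hT hzero (hc'.1.trans hc.1.symm)⟩
end

section
/- Let T be a triangulated category. Let (A, B, C, ∂, p, q) and (A, B₁, C₁, ∂₁, p₁, q₁) be distinguished triangles on the same first object A. Suppose given a morphism of distinguished triangles (𝟙_A, f, g) from (A, B, C, ∂, p, q) to (A, B₁, C₁, ∂₁, p₁, q₁) and a morphism of distinguished triangles (𝟙_A, θ, η) from (A, B₁, C₁, ∂₁, p₁, q₁) to (A, B, C, ∂, p, q), such that θ ∘ f = 𝟙_B and η ∘ g = 𝟙_C. If Hom_T(A, C₁⟦-1⟧) = 0, then there is a 'cross' isomorphism B₁ ⊕ C ≅ B ⊕ C₁. (Lemma 3.5 of the paper.) -/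
open CategoryTheory CategoryTheory.Limits CategoryTheory.Pretriangulated

/-!
The retractions exhibit `B` and `C` as summands of `B₁` and `C₁`, with complementary idempotents
`e = 𝟙 - θ ≫ f` and `e' = 𝟙 - η ≫ g`. Since `d₁ ≫ e = 0`, exactness of the triangle gives
`e = p₁ ≫ b₀`; then `p₁ ≫ (b₀ ≫ p₁ - e') = 0`, so `b₀ ≫ p₁ - e'` factors through a map
`A⟦1⟧ ⟶ C₁`, which vanishes because `Hom(A⟦1⟧, C₁) ≃ Hom(A, C₁⟦-1⟧) = 0`. Hence `p₁` is invertible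
between the complements `e` and `e'`, with inverse `b = e' ≫ b₀ ≫ e`. The cross isomorphism
is `(θ, p₁)` on `B₁` and `(0, g)` on `C`, with inverse `(f, -p)` on `B` and `(b, η)` on `C₁`.
-/

namespace CategoryTheory

section Preadditive

variable {T : Type*} [Category T] [Preadditive T] {B B₁ C C₁ : T}

noncomputable def biprodCrossIso [HasBinaryBiproducts T] {f : B ⟶ B₁} {θ : B₁ ⟶ B} {g : C ⟶ C₁}
    {η : C₁ ⟶ C} {p : B ⟶ C} {p₁ : B₁ ⟶ C₁} {b : C₁ ⟶ B₁}
    (hθf : f ≫ θ = 𝟙 B) (hηg : g ≫ η = 𝟙 C) (hg : p ≫ g = f ≫ p₁) (hη : p₁ ≫ η = θ ≫ p)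
    (hpb : p₁ ≫ b = 𝟙 B₁ - θ ≫ f) (hbp : b ≫ p₁ = 𝟙 C₁ - η ≫ g)
    (hgb : g ≫ b = 0) (hbθ : b ≫ θ = 0) :
    B₁ ⊞ C ≅ B ⊞ C₁ where
  hom := biprod.desc (biprod.lift θ p₁) (biprod.lift 0 g)
  inv := biprod.desc (biprod.lift f (-p)) (biprod.lift b η)
  hom_inv_id := by
    ext <;> simp [hpb, hη, hgb, hηg]
  inv_hom_id := by
    ext <;> simp [hθf, hg, hbθ, hbp]

theorem exists_inverse_on_complements {f : B ⟶ B₁} {θ : B₁ ⟶ B} {g : C ⟶ C₁}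
    {η : C₁ ⟶ C} {p₁ : B₁ ⟶ C₁} {b₀ : C₁ ⟶ B₁}
    (hθf : f ≫ θ = 𝟙 B) (hηg : g ≫ η = 𝟙 C)
    (hpb₀ : p₁ ≫ b₀ = 𝟙 B₁ - θ ≫ f) (hb₀p : b₀ ≫ p₁ = 𝟙 C₁ - η ≫ g) :
    ∃ b : C₁ ⟶ B₁, p₁ ≫ b = 𝟙 B₁ - θ ≫ f ∧ b ≫ p₁ = 𝟙 C₁ - η ≫ g ∧
      g ≫ b = 0 ∧ b ≫ θ = 0 := by
  set e := 𝟙 B₁ - θ ≫ f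
  set e' := 𝟙 C₁ - η ≫ g
  have hee : e ≫ e = e := by
    simp [e, Preadditive.comp_sub, Preadditive.sub_comp, reassoc_of% hθf]
  have he'e' : e' ≫ e' = e' := by
    simp [e', Preadditive.comp_sub, Preadditive.sub_comp, reassoc_of% hηg]
  have hge' : g ≫ e' = 0 := by simp [e', Preadditive.comp_sub, reassoc_of% hηg]
  have heθ : e ≫ θ = 0 := by simp [e, Preadditive.sub_comp, hθf]
  have hpe' : p₁ ≫ e' = e ≫ p₁ := by rw [← hb₀p, ← hpb₀, Category.assoc]
  refine ⟨e' ≫ b₀ ≫ e, ?_, ?_, ?_, ?_⟩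
  · rw [reassoc_of% hpe', reassoc_of% hpb₀, reassoc_of% hee, hee]
  · rw [Category.assoc, Category.assoc, ← hpe', reassoc_of% hb₀p, he'e', he'e']
  · rw [reassoc_of% hge', zero_comp]
  · simp only [Category.assoc, heθ, comp_zero]

end Preadditive

theorem hom_from_shift_eq_zero {T : Type*} [Category T] [HasZeroMorphisms T] [HasShift T ℤ]
    {A X : T} (n : ℤ) (h : ∀ φ : A ⟶ X⟦-n⟧, φ = 0) (s : A⟦n⟧ ⟶ X) : s = 0 :=
  ((shiftEquiv T n).toAdjunction.homEquiv A X).injective ((h _).trans (h _).symm)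

namespace Pretriangulated

variable {T : Type*} [Category T] [Preadditive T] [HasZeroObject T] [HasShift T ℤ]
  [∀ n : ℤ, (shiftFunctor T n).Additive] [Pretriangulated T]

theorem exists_lift_of_mem_distTriang (Δ : Triangle T) (hΔ : Δ ∈ distTriang T) {X Y : T}
    {x : Δ.obj₂ ⟶ X} {y : Δ.obj₃ ⟶ Y} {u : X ⟶ Y} (hx : Δ.mor₁ ≫ x = 0)
    (hxy : Δ.mor₂ ≫ y = x ≫ u) (hY : ∀ s : Δ.obj₁⟦(1 : ℤ)⟧ ⟶ Y, s = 0) :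
    ∃ b : Δ.obj₃ ⟶ X, Δ.mor₂ ≫ b = x ∧ b ≫ u = y := by
  obtain ⟨b, rfl⟩ := Triangle.yoneda_exact₂ Δ hΔ x hx
  refine ⟨b, rfl, ?_⟩
  obtain ⟨s, hs⟩ := Triangle.yoneda_exact₃ Δ hΔ (b ≫ u - y) (by simp [hxy])
  rw [← sub_eq_zero, hs, hY s, comp_zero]

end Pretriangulated

end CategoryTheory

/-- Lemma 3.5: given two distinguished triangles on the same first object `A`, a morphism
of triangles `(𝟙 A, f, g)` one way and `(𝟙 A, θ, η)` the other way, with `θ ∘ f = 𝟙` and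
`η ∘ g = 𝟙`, and `Hom(A, C₁⟦-1⟧) = 0`, there is a cross isomorphism `B₁ ⊞ C ≅ B ⊞ C₁`. -/
theorem cross_isomorphism
    (T : Type*) [Category T] [Preadditive T] [HasZeroObject T] [HasBinaryBiproducts T]
    [HasShift T ℤ] [∀ n : ℤ, (shiftFunctor T n).Additive] [Pretriangulated T]
    [IsTriangulated T]
    (A B C B₁ C₁ : T)
    (d : A ⟶ B) (p : B ⟶ C) (q : C ⟶ A⟦(1:ℤ)⟧)
    (d₁ : A ⟶ B₁) (p₁ : B₁ ⟶ C₁) (q₁ : C₁ ⟶ A⟦(1:ℤ)⟧)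
    (hT : Triangle.mk d p q ∈ distTriang T)
    (hT₁ : Triangle.mk d₁ p₁ q₁ ∈ distTriang T)
    -- the morphism of triangles (𝟙 A, f, g) from (A,B,C) to (A,B₁,C₁)
    (f : B ⟶ B₁) (g : C ⟶ C₁)
    (hf₁ : d ≫ f = 𝟙 A ≫ d₁) (hg₁ : p ≫ g = f ≫ p₁)
    (hq₁ : q ≫ (𝟙 A)⟦(1:ℤ)⟧' = g ≫ q₁)
    -- the morphism of triangles (𝟙 A, θ, η) from (A,B₁,C₁) to (A,B,C)
    (θ : B₁ ⟶ B) (η : C₁ ⟶ C)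
    (hθ₁ : d₁ ≫ θ = 𝟙 A ≫ d) (hη₁ : p₁ ≫ η = θ ≫ p)
    (hq₂ : q₁ ≫ (𝟙 A)⟦(1:ℤ)⟧' = η ≫ q)
    (hθf : f ≫ θ = 𝟙 B) (hηg : g ≫ η = 𝟙 C)
    (hzero : ∀ φ : A ⟶ C₁⟦(-1:ℤ)⟧, φ = 0) :
    Nonempty (B₁ ⊞ C ≅ B ⊞ C₁) := by
  rw [Category.id_comp] at hf₁ hθ₁
  have hd₁e : d₁ ≫ (𝟙 B₁ - θ ≫ f) = 0 := by
    simp [Preadditive.comp_sub, reassoc_of% hθ₁, hf₁]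
  have hp₁e : p₁ ≫ (𝟙 C₁ - η ≫ g) = (𝟙 B₁ - θ ≫ f) ≫ p₁ := by
    simp [Preadditive.comp_sub, Preadditive.sub_comp, reassoc_of% hη₁, hg₁]
  obtain ⟨b₀, hpb₀, hb₀p⟩ :=
    exists_lift_of_mem_distTriang _ hT₁ hd₁e hp₁e (hom_from_shift_eq_zero 1 hzero)
  obtain ⟨b, hpb, hbp, hgb, hbθ⟩ := exists_inverse_on_complements hθf hηg hpb₀ hb₀p
  exact ⟨biprodCrossIso hθf hηg hg₁ hη₁ hpb hbp hgb hbθ⟩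
end

section
/- Let T be a triangulated category. Let (A, B, C, ∂, p, q) and (A, B₁, C₁, ∂₁, p₁, q₁) be distinguished triangles on the same first object A, and let (𝟙_A, f, g) be a morphism of distinguished triangles from the first triangle to the second. Suppose θ : B₁ → B is a morphism satisfying θ ∘ f = 𝟙_B and θ ∘ ∂₁ = ∂, and suppose Hom_T(A, C₁⟦-1⟧) = 0. Then there exists a unique morphism η : C₁ → C such that (𝟙_A, θ, η) is a morphism of distinguished triangles; this η satisfies η ∘ g = 𝟙_C, and there is an isomorphism B₁ ⊕ C ≅ B ⊕ C₁. (The triangulated core of the implication (i) ⟹ (ii) of Theorem 1.1 of the paper.) -/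
open CategoryTheory CategoryTheory.Limits CategoryTheory.Pretriangulated

/-! The fill-in `η` comes from TR3. Since `θ` retracts `f` compatibly with `d₁` and `d`, the map
`g` is a monomorphism, so `Hom(A⟦1⟧, C₁) = 0` forces `Hom(A⟦1⟧, C) = 0`. By the long exact Hom sequences,
maps out of `C` and out of `C₁` are then determined by their composites with `p` and `p₁`; this
gives the uniqueness of `η` and `g ≫ η = 𝟙 C`.

The cross isomorphism is the matrix `[[θ, p₁], [0, g]]` with inverse `[[f, -p], [a, η]]`. For `a`
take any `a₀` with `p₁ ≫ a₀ = 𝟙 - θ ≫ f` (it exists because `d₁ ≫ (𝟙 - θ ≫ f) = 0`) and set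
`a = (𝟙 - η ≫ g) ≫ a₀`; the correction makes `g ≫ a = 0`, and `a ≫ θ = 0` because
`(𝟙 - η ≫ g) ≫ q₁ = 0`. -/

namespace CategoryTheory

section Biprod

variable {T : Type*} [Category T] [Preadditive T] [HasBinaryBiproducts T]

noncomputable def biprodIsoOfMatrix {B B₁ C C₁ : T} (θ : B₁ ⟶ B) (p₁ : B₁ ⟶ C₁) (g : C ⟶ C₁)
    (f : B ⟶ B₁) (p : B ⟶ C) (a : C₁ ⟶ B₁) (η : C₁ ⟶ C)
    (h₁ : θ ≫ f + p₁ ≫ a = 𝟙 B₁) (h₂ : p₁ ≫ η = θ ≫ p) (h₃ : g ≫ a = 0) (h₄ : g ≫ η = 𝟙 C)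
    (h₅ : f ≫ θ = 𝟙 B) (h₆ : p ≫ g = f ≫ p₁) (h₇ : a ≫ θ = 0) (h₈ : a ≫ p₁ + η ≫ g = 𝟙 C₁) :
    B₁ ⊞ C ≅ B ⊞ C₁ where
  hom := biprod.desc (biprod.lift θ p₁) (biprod.lift 0 g)
  inv := biprod.desc (biprod.lift f (-p)) (biprod.lift a η)
  hom_inv_id := by
    ext <;> simp [h₁, ← h₂, h₃, h₄]
  inv_hom_id := by
    ext <;> simp [h₅, ← h₆, h₇, h₈]

end Biprod

section Shift

variable {T : Type*} [Category T] [Preadditive T] [HasShift T ℤ]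

theorem shift_one_hom_eq_zero {A Y : T} (h : ∀ φ : A ⟶ Y⟦(-1:ℤ)⟧, φ = 0)
    (ψ : A⟦(1:ℤ)⟧ ⟶ Y) : ψ = 0 :=
  ((shiftEquiv T (1:ℤ)).toAdjunction.homEquiv A Y).injective ((h _).trans (h _).symm)

end Shift

section Triangulated

variable {T : Type*} [Category T] [Preadditive T] [HasZeroObject T] [HasShift T ℤ]
  [∀ n : ℤ, (shiftFunctor T n).Additive] [Pretriangulated T]

theorem Pretriangulated.cancel_mor₂_of_hom_eq_zero {Δ : Triangle T} (hΔ : Δ ∈ distTriang T)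
    {X : T} (hX : ∀ ψ : Δ.obj₁⟦(1:ℤ)⟧ ⟶ X, ψ = 0) {u v : Δ.obj₃ ⟶ X} (h : Δ.mor₂ ≫ u = Δ.mor₂ ≫ v) :
    u = v := by
  obtain ⟨ψ, hψ⟩ := Triangle.yoneda_exact₃ Δ hΔ (u - v)
    (by rw [Preadditive.comp_sub, h, sub_self])
  rwa [hX ψ, comp_zero, sub_eq_zero] at hψ

variable {A B C B₁ C₁ : T} {d : A ⟶ B} {p : B ⟶ C} {q : C ⟶ A⟦(1:ℤ)⟧}
  {d₁ : A ⟶ B₁} {p₁ : B₁ ⟶ C₁} {q₁ : C₁ ⟶ A⟦(1:ℤ)⟧} {f : B ⟶ B₁} {g : C ⟶ C₁} {θ : B₁ ⟶ B}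

theorem Pretriangulated.mono_hom₃_of_retraction_hom₂ (hT : Triangle.mk d p q ∈ distTriang T)
    (hT₁ : Triangle.mk d₁ p₁ q₁ ∈ distTriang T) (hpg : p ≫ g = f ≫ p₁) (hq : q = g ≫ q₁)
    (hθf : f ≫ θ = 𝟙 B) (hθd : d₁ ≫ θ = d) : Mono g := by
  refine Preadditive.mono_of_cancel_zero _ fun {X} ψ hψ => ?_
  have hψq : ψ ≫ q = 0 := by rw [hq, reassoc_of% hψ, zero_comp]
  obtain ⟨χ, rfl⟩ : ∃ χ : X ⟶ B, ψ = χ ≫ p := Triangle.coyoneda_exact₃ _ hT ψ hψq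
  have hχfp : (χ ≫ f) ≫ p₁ = 0 := by rwa [Category.assoc, ← hpg, ← Category.assoc]
  obtain ⟨k, hk⟩ : ∃ k : X ⟶ A, χ ≫ f = k ≫ d₁ := Triangle.coyoneda_exact₂ _ hT₁ _ hχfp
  have hχ : χ = k ≫ d := by simpa [hθf, hθd] using hk =≫ θ
  have hdp : d ≫ p = 0 := comp_distTriang_mor_zero₁₂ _ hT
  rw [hχ, Category.assoc, hdp, comp_zero]

theorem Pretriangulated.nonempty_cross_biprod_iso [HasBinaryBiproducts T]
    (hT₁ : Triangle.mk d₁ p₁ q₁ ∈ distTriang T) {η : C₁ ⟶ C}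
    (hdf : d ≫ f = d₁) (hpg : p ≫ g = f ≫ p₁) (hq : q = g ≫ q₁) (hθf : f ≫ θ = 𝟙 B)
    (hθd : d₁ ≫ θ = d) (hpη : p₁ ≫ η = θ ≫ p) (hηq : q₁ = η ≫ q) (hgη : g ≫ η = 𝟙 C)
    (hC₁ : ∀ ψ : A⟦(1:ℤ)⟧ ⟶ C₁, ψ = 0) :
    Nonempty (B₁ ⊞ C ≅ B ⊞ C₁) := by
  have hd₁ : d₁ ≫ (𝟙 B₁ - θ ≫ f) = 0 := by
    rw [Preadditive.comp_sub, reassoc_of% hθd, hdf, Category.comp_id, sub_self]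
  obtain ⟨a₀, ha₀⟩ : ∃ a₀ : C₁ ⟶ B₁, 𝟙 B₁ - θ ≫ f = p₁ ≫ a₀ :=
    Triangle.yoneda_exact₂ _ hT₁ _ hd₁
  have ha₀θ : p₁ ≫ a₀ ≫ θ = 0 := by
    rw [← Category.assoc, ← ha₀, Preadditive.sub_comp, Category.assoc, hθf]
    simp
  obtain ⟨χ, hχ⟩ : ∃ χ : A⟦(1:ℤ)⟧ ⟶ B, a₀ ≫ θ = q₁ ≫ χ :=
    Triangle.yoneda_exact₃ _ hT₁ _ ha₀θ
  have hηgq : (𝟙 C₁ - η ≫ g) ≫ q₁ = 0 := by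
    rw [Preadditive.sub_comp, Category.assoc, ← hq, ← hηq]
    simp
  set a := (𝟙 C₁ - η ≫ g) ≫ a₀
  have hpa : θ ≫ f + p₁ ≫ a = 𝟙 B₁ := by
    have hpηga₀ : p₁ ≫ η ≫ g ≫ a₀ = θ ≫ f - θ ≫ f ≫ θ ≫ f := by
      rw [reassoc_of% hpη, reassoc_of% hpg, ← ha₀]
      simp [Preadditive.comp_sub]
    simp [a, Preadditive.comp_sub, ← ha₀, hpηga₀, reassoc_of% hθf]
  have hga : g ≫ a = 0 := by simp [a, Preadditive.comp_sub, reassoc_of% hgη]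
  have haθ : a ≫ θ = 0 := by rw [Category.assoc, hχ, reassoc_of% hηgq, zero_comp]
  have hap : a ≫ p₁ + η ≫ g = 𝟙 C₁ := by
    have hpa' : p₁ ≫ a = 𝟙 B₁ - θ ≫ f := eq_sub_of_add_eq' hpa
    refine cancel_mor₂_of_hom_eq_zero hT₁ hC₁ (?_ : p₁ ≫ _ = p₁ ≫ _)
    rw [Preadditive.comp_add, reassoc_of% hpa', reassoc_of% hpη, hpg]
    simp [Preadditive.sub_comp]
  exact ⟨biprodIsoOfMatrix θ p₁ g f p a η hpa hpη hga hgη hθf hpg haθ hap⟩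

end Triangulated

end CategoryTheory

/-- The triangulated core of the implication (i) ⟹ (ii) of Theorem 1.1: given two
distinguished triangles on the same first object `A`, a morphism of triangles `(𝟙 A, f, g)`
from the first to the second, and `θ : B₁ ⟶ B` with `θ ∘ f = 𝟙 B` and `θ ∘ ∂₁ = ∂`,
and `Hom(A, C₁⟦-1⟧) = 0`, then there is a unique `η : C₁ ⟶ C` making `(𝟙 A, θ, η)` a
morphism of triangles; any such `η` satisfies `η ∘ g = 𝟙 C`, and `B₁ ⊞ C ≅ B ⊞ C₁`. -/
theorem degree_one_gives_cross_isomorphism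
    (T : Type*) [Category T] [Preadditive T] [HasZeroObject T] [HasBinaryBiproducts T]
    [HasShift T ℤ] [∀ n : ℤ, (shiftFunctor T n).Additive] [Pretriangulated T]
    [IsTriangulated T]
    (A B C B₁ C₁ : T)
    (d : A ⟶ B) (p : B ⟶ C) (q : C ⟶ A⟦(1:ℤ)⟧)
    (d₁ : A ⟶ B₁) (p₁ : B₁ ⟶ C₁) (q₁ : C₁ ⟶ A⟦(1:ℤ)⟧)
    (hT : Triangle.mk d p q ∈ distTriang T)
    (hT₁ : Triangle.mk d₁ p₁ q₁ ∈ distTriang T)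
    -- the morphism of triangles (𝟙 A, f, g) from (A,B,C) to (A,B₁,C₁)
    (f : B ⟶ B₁) (g : C ⟶ C₁)
    (hf₁ : d ≫ f = 𝟙 A ≫ d₁) (hg₁ : p ≫ g = f ≫ p₁)
    (hq₁ : q ≫ (𝟙 A)⟦(1:ℤ)⟧' = g ≫ q₁)
    (θ : B₁ ⟶ B)
    (hθf : f ≫ θ = 𝟙 B) (hθd : d₁ ≫ θ = d)
    (hzero : ∀ φ : A ⟶ C₁⟦(-1:ℤ)⟧, φ = 0) :
    (∃! η : C₁ ⟶ C, p₁ ≫ η = θ ≫ p ∧ q₁ ≫ (𝟙 A)⟦(1:ℤ)⟧' = η ≫ q) ∧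
    (∀ η : C₁ ⟶ C, (p₁ ≫ η = θ ≫ p ∧ q₁ ≫ (𝟙 A)⟦(1:ℤ)⟧' = η ≫ q) → g ≫ η = 𝟙 C) ∧
    Nonempty (B₁ ⊞ C ≅ B ⊞ C₁) := by
  have hid : (𝟙 A)⟦(1:ℤ)⟧' = 𝟙 _ := (shiftFunctor T (1:ℤ)).map_id A
  simp only [hid, Category.id_comp, Category.comp_id] at hf₁ hq₁ ⊢
  have hC₁ : ∀ ψ : A⟦(1:ℤ)⟧ ⟶ C₁, ψ = 0 := shift_one_hom_eq_zero hzero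
  have : Mono g := mono_hom₃_of_retraction_hom₂ hT hT₁ hg₁ hq₁ hθf hθd
  have hC : ∀ ψ : A⟦(1:ℤ)⟧ ⟶ C, ψ = 0 := fun ψ => by
    rw [← cancel_mono g, hC₁ (ψ ≫ g), zero_comp]
  have hsection : ∀ η : C₁ ⟶ C, p₁ ≫ η = θ ≫ p → g ≫ η = 𝟙 C := fun η hη =>
    cancel_mor₂_of_hom_eq_zero hT hC (by
      change p ≫ g ≫ η = p ≫ 𝟙 C
      rw [reassoc_of% hg₁, hη, reassoc_of% hθf, Category.comp_id])
  obtain ⟨η, hpη, hηq⟩ : ∃ η : C₁ ⟶ C, p₁ ≫ η = θ ≫ p ∧ q₁ ≫ (𝟙 A)⟦(1:ℤ)⟧' = η ≫ q :=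
    complete_distinguished_triangle_morphism _ _ hT₁ hT (𝟙 A) θ
      (hθd.trans (Category.id_comp d).symm)
  rw [hid, Category.comp_id] at hηq
  have hunique : ∀ η' : C₁ ⟶ C, p₁ ≫ η' = θ ≫ p → η' = η := fun η' hη' =>
    cancel_mor₂_of_hom_eq_zero hT₁ hC (show p₁ ≫ η' = p₁ ≫ η from hη'.trans hpη.symm)
  exact ⟨⟨η, ⟨hpη, hηq⟩, fun η' hη' => hunique η' hη'.1⟩, fun η' hη' => hsection η' hη'.1,
    nonempty_cross_biprod_iso hT₁ hf₁ hg₁ hq₁ hθf hθd hpη hηq (hsection η hpη) hC₁⟩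
end

section
/- Under the cohomology ladder setup, for every integer k the sequence 0 → BX^k → CX^k ⊕ BY^k → CY^k → 0, in which the first map is x ↦ (j^k x, −θ^k x) and the second map is (w̃, y) ↦ η^k w̃ + i^k y, is a short exact sequence of Λ-modules; moreover the map w ↦ (g^k w, 0) is a right section of the second map. (The exact sequence established in Section 4 of the paper, abstracting 0 → H^k(X) → H^k(W̃) ⊕ H^k(Y) → H^k(W) → 0.) -/
/-!
Exactness in the middle is the Mayer–Vietoris diagram chase for two long exact sequences
sharing the terms `R`, joined by `θ` and `η`. Injectivity holds because `f ∘ rY = rX` makes `θ`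
injective on `range rX = ker j`, and `(g w, 0)` is a preimage of `w` because `η ∘ g = id`.
-/

open Function

open LinearMap

section Ladder

variable {Λ R R' BX BY CX CY : Type*} [CommRing Λ]
  [AddCommGroup R] [Module Λ R] [AddCommGroup R'] [Module Λ R']
  [AddCommGroup BX] [Module Λ BX] [AddCommGroup BY] [Module Λ BY]
  [AddCommGroup CX] [Module Λ CX] [AddCommGroup CY] [Module Λ CY]
  {rX : R →ₗ[Λ] BX} {j : BX →ₗ[Λ] CX} {θ : BX →ₗ[Λ] BY} {rY : R →ₗ[Λ] BY}
  {η : CX →ₗ[Λ] CY} {i : BY →ₗ[Λ] CY}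

theorem injective_prod_neg_of_exact {f : BY →ₗ[Λ] BX} (hX : Exact rX j)
    (hθr : θ ∘ₗ rX = rY) (hfr : f ∘ₗ rY = rX) :
    Injective (j.prod (-θ)) := by
  refine (injective_iff_map_eq_zero _).mpr fun x hx => ?_
  obtain ⟨hj, hnθ⟩ := Prod.ext_iff.mp hx
  obtain ⟨r, rfl⟩ := (hX x).mp hj
  have hθ : θ (rX r) = 0 := neg_eq_zero.mp hnθ
  calc rX r = f (θ (rX r)) := by
        rw [← LinearMap.comp_apply θ, hθr, ← LinearMap.comp_apply, hfr]
    _ = 0 := by rw [hθ, map_zero]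

theorem coprod_comp_prod_neg_eq_zero (hiθ : i ∘ₗ θ = η ∘ₗ j) :
    η.coprod i ∘ₗ j.prod (-θ) = 0 := by
  rw [coprod_comp_prod, comp_neg, hiθ, add_neg_cancel]

theorem exact_prod_neg_coprod_of_ladder {dX : CX →ₗ[Λ] R'} {dY : CY →ₗ[Λ] R'}
    (hX₁ : Exact rX j) (hX₂ : Exact j dX) (hY₁ : Exact rY i) (hY₂ : Exact i dY)
    (hθr : θ ∘ₗ rX = rY) (hiθ : i ∘ₗ θ = η ∘ₗ j) (hdη : dY ∘ₗ η = dX) :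
    Exact (j.prod (-θ)) (η.coprod i) := by
  refine exact_of_comp_of_mem_range (coprod_comp_prod_neg_eq_zero hiθ) ?_
  rintro ⟨w, y⟩ hwy
  simp only [coprod_apply] at hwy
  obtain ⟨x₀, rfl⟩ : ∃ x₀, j x₀ = w := (hX₂ w).mp <| by
    calc dX w = dY (η w + i y) := by
          rw [map_add, hY₂.apply_apply_eq_zero, add_zero, ← LinearMap.comp_apply, hdη]
      _ = 0 := by rw [hwy, map_zero]
  obtain ⟨r, hr⟩ : ∃ r, rY r = y + θ x₀ := (hY₁ _).mp <| by
    rw [map_add, ← LinearMap.comp_apply i θ, hiθ, LinearMap.comp_apply, add_comm, hwy]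
  refine ⟨x₀ - rX r, Prod.ext ?_ ?_⟩
  · simp [hX₁.apply_apply_eq_zero]
  · rw [← hθr, LinearMap.comp_apply] at hr
    simp [hr]

end Ladder

theorem cohomology_short_exact_sequence_general
    (Λ : Type*) [CommRing Λ]
    (R BX BY CX CY : ℤ → Type*)
    [∀ k, AddCommGroup (R k)] [∀ k, Module Λ (R k)]
    [∀ k, AddCommGroup (BX k)] [∀ k, Module Λ (BX k)]
    [∀ k, AddCommGroup (BY k)] [∀ k, Module Λ (BY k)]
    [∀ k, AddCommGroup (CX k)] [∀ k, Module Λ (CX k)]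
    [∀ k, AddCommGroup (CY k)] [∀ k, Module Λ (CY k)]
    (rX : ∀ k, R k →ₗ[Λ] BX k) (j : ∀ k, BX k →ₗ[Λ] CX k) (dX : ∀ k, CX k →ₗ[Λ] R (k+1))
    (rY : ∀ k, R k →ₗ[Λ] BY k) (i : ∀ k, BY k →ₗ[Λ] CY k) (dY : ∀ k, CY k →ₗ[Λ] R (k+1))
    (hXex₁ : ∀ k, Function.Exact (rX k) (j k))
    (hXex₂ : ∀ k, Function.Exact (j k) (dX k))
    (hYex₁ : ∀ k, Function.Exact (rY k) (i k))
    (hYex₂ : ∀ k, Function.Exact (i k) (dY k))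
    (f : ∀ k, BY k →ₗ[Λ] BX k) (g : ∀ k, CY k →ₗ[Λ] CX k)
    (hfr : ∀ k, (f k).comp (rY k) = rX k)
    (θ : ∀ k, BX k →ₗ[Λ] BY k) (η : ∀ k, CX k →ₗ[Λ] CY k)
    (hθr : ∀ k, (θ k).comp (rX k) = rY k)
    (hiθ : ∀ k, (i k).comp (θ k) = (η k).comp (j k))
    (hdη : ∀ k, (dY k).comp (η k) = dX k)
    (hηg : ∀ k, (η k).comp (g k) = LinearMap.id)
    (k : ℤ) :
    Function.Injective ⇑(LinearMap.prod (j k) (-(θ k))) ∧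
    Function.Exact ⇑(LinearMap.prod (j k) (-(θ k))) ⇑(LinearMap.coprod (η k) (i k)) ∧
    Function.Surjective ⇑(LinearMap.coprod (η k) (i k)) ∧
    (∀ w : CY k, LinearMap.coprod (η k) (i k) ((g k) w, 0) = w) := by
  have hsection : ∀ w, (η k).coprod (i k) (g k w, 0) = w := fun w => by
    rw [coprod_apply, map_zero, add_zero, ← LinearMap.comp_apply, hηg, id_apply]
  exact ⟨injective_prod_neg_of_exact (hXex₁ k) (hθr k) (hfr k),
    exact_prod_neg_coprod_of_ladder (hXex₁ k) (hXex₂ k) (hYex₁ k) (hYex₂ k) (hθr k) (hiθ k)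
      (hdη k),
    fun w => ⟨_, hsection w⟩, hsection⟩

/-- Section 4: under the cohomology ladder setup, for every `k` the sequence
`0 → BX^k → CX^k ⊕ BY^k → CY^k → 0`, with maps `x ↦ (j x, -θ x)` and
`(w̃, y) ↦ η w̃ + i y`, is short exact, and `w ↦ (g w, 0)` is a right section. -/
theorem cohomology_short_exact_sequence
    (Λ : Type*) [CommRing Λ]
    (R BX BY CX CY : ℤ → Type*)
    [∀ k, AddCommGroup (R k)] [∀ k, Module Λ (R k)]
    [∀ k, AddCommGroup (BX k)] [∀ k, Module Λ (BX k)]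
    [∀ k, AddCommGroup (BY k)] [∀ k, Module Λ (BY k)]
    [∀ k, AddCommGroup (CX k)] [∀ k, Module Λ (CX k)]
    [∀ k, AddCommGroup (CY k)] [∀ k, Module Λ (CY k)]
    (rX : ∀ k, R k →ₗ[Λ] BX k) (j : ∀ k, BX k →ₗ[Λ] CX k) (dX : ∀ k, CX k →ₗ[Λ] R (k+1))
    (rY : ∀ k, R k →ₗ[Λ] BY k) (i : ∀ k, BY k →ₗ[Λ] CY k) (dY : ∀ k, CY k →ₗ[Λ] R (k+1))
    (hXex₁ : ∀ k, Function.Exact (rX k) (j k))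
    (hXex₂ : ∀ k, Function.Exact (j k) (dX k))
    (hXex₃ : ∀ k, Function.Exact (dX k) (rX (k+1)))
    (hYex₁ : ∀ k, Function.Exact (rY k) (i k))
    (hYex₂ : ∀ k, Function.Exact (i k) (dY k))
    (hYex₃ : ∀ k, Function.Exact (dY k) (rY (k+1)))
    (f : ∀ k, BY k →ₗ[Λ] BX k) (g : ∀ k, CY k →ₗ[Λ] CX k)
    (hfr : ∀ k, (f k).comp (rY k) = rX k)
    (hjf : ∀ k, (j k).comp (f k) = (g k).comp (i k))
    (hdg : ∀ k, (dX k).comp (g k) = dY k)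
    (θ : ∀ k, BX k →ₗ[Λ] BY k) (η : ∀ k, CX k →ₗ[Λ] CY k)
    (hθr : ∀ k, (θ k).comp (rX k) = rY k)
    (hiθ : ∀ k, (i k).comp (θ k) = (η k).comp (j k))
    (hdη : ∀ k, (dY k).comp (η k) = dX k)
    (hθf : ∀ k, (θ k).comp (f k) = LinearMap.id)
    (hηg : ∀ k, (η k).comp (g k) = LinearMap.id)
    (k : ℤ) :
    Function.Injective ⇑(LinearMap.prod (j k) (-(θ k))) ∧
    Function.Exact ⇑(LinearMap.prod (j k) (-(θ k))) ⇑(LinearMap.coprod (η k) (i k)) ∧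
    Function.Surjective ⇑(LinearMap.coprod (η k) (i k)) ∧
    (∀ w : CY k, LinearMap.coprod (η k) (i k) ((g k) w, 0) = w) :=
  cohomology_short_exact_sequence_general Λ R BX BY CX CY rX j dX rY i dY hXex₁ hXex₂ hYex₁ hYex₂ f
    g hfr θ η hθr hiθ hdη hηg k
end

section
/- Under the cohomology ladder setup, for every integer k the Λ-linear map φ : BX^k ⊕ CY^k → CX^k ⊕ BY^k defined by φ(x, w) = (j^k x + g^k w, −θ^k x) is an isomorphism of Λ-modules. (Proposition 4.1 of the paper, abstracting the cross isomorphism H^k(X) ⊕ H^k(W) ≅ H^k(W̃) ⊕ H^k(Y).) -/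
/-!
Exactness of the two rows, linked by `θ` and `η`, gives `ker θ ⊓ ker j = ⊥` and `j (ker θ) = ker η`.
Then `(x, w) ↦ (j x + g w, -θ x)` is injective because `η` kills `j (ker θ)` and retracts `g`, and
surjective because `θ` is onto and every `c : CX` differs from `g (η c)` by an element of
`ker η = j (ker θ)`.
-/

open Function
open LinearMap (ker mem_ker)

theorem disjoint_ker_of_exact_ladder {Λ : Type*} [Semiring Λ]
    {R BX CX BY CX₀ CY₀ : Type*}
    [AddCommMonoid R] [Module Λ R] [AddCommMonoid BX] [Module Λ BX]
    [AddCommMonoid CX] [Module Λ CX] [AddCommMonoid BY] [Module Λ BY]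
    [AddCommMonoid CX₀] [Module Λ CX₀] [AddCommMonoid CY₀] [Module Λ CY₀]
    {rX : R →ₗ[Λ] BX} {j : BX →ₗ[Λ] CX} {rY : R →ₗ[Λ] BY} {θ : BX →ₗ[Λ] BY}
    {dX₀ : CX₀ →ₗ[Λ] R} {dY₀ : CY₀ →ₗ[Λ] R} {g₀ : CY₀ →ₗ[Λ] CX₀}
    (hrj : Exact rX j) (hdrX : Exact dX₀ rX) (hdrY : Exact dY₀ rY)
    (hdg : dX₀ ∘ₗ g₀ = dY₀) (hθr : θ ∘ₗ rX = rY) :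
    Disjoint (ker θ) (ker j) := by
  rw [Submodule.disjoint_def]
  intro x hθx hjx
  obtain ⟨r, rfl⟩ := (hrj x).mp hjx
  have hrY : rY r = 0 := by rw [← hθr]; exact hθx
  obtain ⟨c, rfl⟩ := (hdrY r).mp hrY
  rw [← hdg]
  exact hdrX.apply_apply_eq_zero (g₀ c)

theorem map_ker_eq_ker_of_exact_ladder {Λ : Type*} [Ring Λ]
    {R BX CX BY CY R₁ : Type*}
    [AddCommGroup R] [Module Λ R] [AddCommGroup BX] [Module Λ BX]
    [AddCommGroup CX] [Module Λ CX] [AddCommGroup BY] [Module Λ BY]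
    [AddCommGroup CY] [Module Λ CY] [AddCommGroup R₁] [Module Λ R₁]
    {rX : R →ₗ[Λ] BX} {j : BX →ₗ[Λ] CX} {dX : CX →ₗ[Λ] R₁}
    {rY : R →ₗ[Λ] BY} {i : BY →ₗ[Λ] CY} {dY : CY →ₗ[Λ] R₁}
    {θ : BX →ₗ[Λ] BY} {η : CX →ₗ[Λ] CY}
    (hrj : Exact rX j) (hjd : Exact j dX) (hri : Exact rY i)
    (hθr : θ ∘ₗ rX = rY) (hiθ : i ∘ₗ θ = η ∘ₗ j) (hdη : dY ∘ₗ η = dX) :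
    (ker θ).map j = ker η := by
  apply le_antisymm
  · rintro _ ⟨x, hθx, rfl⟩
    change η (j x) = 0
    rw [← LinearMap.comp_apply, ← hiθ, LinearMap.comp_apply, mem_ker.mp hθx, map_zero]
  · intro v hηv
    have hdv : dX v = 0 := by rw [← hdη, LinearMap.comp_apply, mem_ker.mp hηv, map_zero]
    obtain ⟨x, rfl⟩ := (hjd v).mp hdv
    have hiθx : i (θ x) = 0 := by rw [← LinearMap.comp_apply, hiθ]; exact hηv
    obtain ⟨r, hr⟩ := (hri (θ x)).mp hiθx
    refine ⟨x - rX r, ?_, by rw [map_sub, hrj.apply_apply_eq_zero, sub_zero]⟩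
    rw [SetLike.mem_coe, mem_ker, map_sub, ← LinearMap.comp_apply θ, hθr, hr, sub_self]

theorem bijective_cross_map {Λ BX CX BY CY : Type*} [Ring Λ]
    [AddCommGroup BX] [Module Λ BX] [AddCommGroup CX] [Module Λ CX]
    [AddCommGroup BY] [Module Λ BY] [AddCommGroup CY] [Module Λ CY]
    {j : BX →ₗ[Λ] CX} {g : CY →ₗ[Λ] CX} {θ : BX →ₗ[Λ] BY} {η : CX →ₗ[Λ] CY}
    (hηg : η ∘ₗ g = LinearMap.id) (hθ : Surjective θ)
    (hdisj : Disjoint (ker θ) (ker j)) (hmap : (ker θ).map j = ker η) :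
    Bijective (LinearMap.prod (LinearMap.coprod j g) ((-θ) ∘ₗ LinearMap.fst Λ BX CY)) := by
  have hηgw (w : CY) : η (g w) = w := congr($hηg w)
  constructor
  · rw [injective_iff_map_eq_zero]
    rintro ⟨x, w⟩ h
    simp only [LinearMap.prod_apply, LinearMap.coprod_apply, LinearMap.comp_apply,
      LinearMap.fst_apply, LinearMap.neg_apply, Function.prod_apply,
      Prod.mk_eq_zero, neg_eq_zero] at h
    obtain ⟨hjg, hθx⟩ := h
    have hηjx : η (j x) = 0 := mem_ker.mp (hmap ▸ Submodule.mem_map_of_mem hθx)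
    have hw : w = 0 := by simpa [hηjx, hηgw] using congr(η $hjg)
    have hjx : j x = 0 := by simpa [hw] using hjg
    simp [Submodule.disjoint_def.mp hdisj x hθx hjx, hw]
  · rintro ⟨c, b⟩
    obtain ⟨x₀, hx₀⟩ := hθ (-b)
    set u := c - j x₀
    have hv : u - g (η u) ∈ (ker θ).map j := by
      rw [hmap, mem_ker, map_sub, hηgw, sub_self]
    obtain ⟨x₁, hθx₁, hjx₁⟩ := hv
    refine ⟨(x₀ + x₁, η u), Prod.ext ?_ ?_⟩
    · simp only [LinearMap.prod_apply, LinearMap.coprod_apply, Function.prod_apply, map_add, hjx₁,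
        u]
      abel
    · simp [hx₀, mem_ker.mp hθx₁]

theorem cohomology_cross_isomorphism_general
    (Λ : Type*) [CommRing Λ]
    (R BX BY CX CY : ℤ → Type*)
    [∀ k, AddCommGroup (R k)] [∀ k, Module Λ (R k)]
    [∀ k, AddCommGroup (BX k)] [∀ k, Module Λ (BX k)]
    [∀ k, AddCommGroup (BY k)] [∀ k, Module Λ (BY k)]
    [∀ k, AddCommGroup (CX k)] [∀ k, Module Λ (CX k)]
    [∀ k, AddCommGroup (CY k)] [∀ k, Module Λ (CY k)]
    (rX : ∀ k, R k →ₗ[Λ] BX k) (j : ∀ k, BX k →ₗ[Λ] CX k) (dX : ∀ k, CX k →ₗ[Λ] R (k+1))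
    (rY : ∀ k, R k →ₗ[Λ] BY k) (i : ∀ k, BY k →ₗ[Λ] CY k) (dY : ∀ k, CY k →ₗ[Λ] R (k+1))
    (hXex₁ : ∀ k, Function.Exact (rX k) (j k))
    (hXex₂ : ∀ k, Function.Exact (j k) (dX k))
    (hXex₃ : ∀ k, Function.Exact (dX k) (rX (k+1)))
    (hYex₁ : ∀ k, Function.Exact (rY k) (i k))
    (hYex₃ : ∀ k, Function.Exact (dY k) (rY (k+1)))
    (f : ∀ k, BY k →ₗ[Λ] BX k) (g : ∀ k, CY k →ₗ[Λ] CX k)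
    (hdg : ∀ k, (dX k).comp (g k) = dY k)
    (θ : ∀ k, BX k →ₗ[Λ] BY k) (η : ∀ k, CX k →ₗ[Λ] CY k)
    (hθr : ∀ k, (θ k).comp (rX k) = rY k)
    (hiθ : ∀ k, (i k).comp (θ k) = (η k).comp (j k))
    (hdη : ∀ k, (dY k).comp (η k) = dX k)
    (hθf : ∀ k, (θ k).comp (f k) = LinearMap.id)
    (hηg : ∀ k, (η k).comp (g k) = LinearMap.id)
    (k : ℤ) :
    Function.Bijective
      ⇑(LinearMap.prod (LinearMap.coprod (j k) (g k))
        ((-(θ k)).comp (LinearMap.fst Λ (BX k) (CY k)))) := by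
  -- `dX (k - 1)` lands in `R (k - 1 + 1)`, which is not definitionally `R k`.
  obtain ⟨k, rfl⟩ : ∃ k', k = k' + 1 := ⟨k - 1, by ring⟩
  exact bijective_cross_map (hηg _) (LinearMap.surjective_of_comp_eq_id _ _ (hθf _))
    (disjoint_ker_of_exact_ladder (hXex₁ _) (hXex₃ k) (hYex₃ k) (hdg k) (hθr _))
    (map_ker_eq_ker_of_exact_ladder (hXex₁ _) (hXex₂ _) (hYex₁ _) (hθr _) (hiθ _) (hdη _))

/-- Proposition 4.1: under the cohomology ladder setup, the map
`φ(x, w) = (j x + g w, -θ x)` is an isomorphism `BX^k ⊕ CY^k ≅ CX^k ⊕ BY^k`. -/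
theorem cohomology_cross_isomorphism
    (Λ : Type*) [CommRing Λ]
    (R BX BY CX CY : ℤ → Type*)
    [∀ k, AddCommGroup (R k)] [∀ k, Module Λ (R k)]
    [∀ k, AddCommGroup (BX k)] [∀ k, Module Λ (BX k)]
    [∀ k, AddCommGroup (BY k)] [∀ k, Module Λ (BY k)]
    [∀ k, AddCommGroup (CX k)] [∀ k, Module Λ (CX k)]
    [∀ k, AddCommGroup (CY k)] [∀ k, Module Λ (CY k)]
    (rX : ∀ k, R k →ₗ[Λ] BX k) (j : ∀ k, BX k →ₗ[Λ] CX k) (dX : ∀ k, CX k →ₗ[Λ] R (k+1))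
    (rY : ∀ k, R k →ₗ[Λ] BY k) (i : ∀ k, BY k →ₗ[Λ] CY k) (dY : ∀ k, CY k →ₗ[Λ] R (k+1))
    (hXex₁ : ∀ k, Function.Exact (rX k) (j k))
    (hXex₂ : ∀ k, Function.Exact (j k) (dX k))
    (hXex₃ : ∀ k, Function.Exact (dX k) (rX (k+1)))
    (hYex₁ : ∀ k, Function.Exact (rY k) (i k))
    (hYex₂ : ∀ k, Function.Exact (i k) (dY k))
    (hYex₃ : ∀ k, Function.Exact (dY k) (rY (k+1)))
    (f : ∀ k, BY k →ₗ[Λ] BX k) (g : ∀ k, CY k →ₗ[Λ] CX k)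
    (hfr : ∀ k, (f k).comp (rY k) = rX k)
    (hjf : ∀ k, (j k).comp (f k) = (g k).comp (i k))
    (hdg : ∀ k, (dX k).comp (g k) = dY k)
    (θ : ∀ k, BX k →ₗ[Λ] BY k) (η : ∀ k, CX k →ₗ[Λ] CY k)
    (hθr : ∀ k, (θ k).comp (rX k) = rY k)
    (hiθ : ∀ k, (i k).comp (θ k) = (η k).comp (j k))
    (hdη : ∀ k, (dY k).comp (η k) = dX k)
    (hθf : ∀ k, (θ k).comp (f k) = LinearMap.id)
    (hηg : ∀ k, (η k).comp (g k) = LinearMap.id)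
    (k : ℤ) :
    Function.Bijective
      ⇑(LinearMap.prod (LinearMap.coprod (j k) (g k))
        ((-(θ k)).comp (LinearMap.fst Λ (BX k) (CY k)))) :=
  cohomology_cross_isomorphism_general Λ R BX BY CX CY rX j dX rY i dY hXex₁ hXex₂ hXex₃ hYex₁ hYex₃
    f g hdg θ η hθr hiθ hdη hθf hηg k
end

section
/- Under the cohomology ladder setup, for every integer k there exist unique Λ-linear maps λ^k : CX^k → BX^k and μ^k : CX^k → CY^k satisfying λ^k ∘ j^k + f^k ∘ θ^k = id_{BX^k}, λ^k ∘ g^k = 0, μ^k ∘ j^k = i^k ∘ θ^k and μ^k ∘ g^k = id_{CY^k}. Moreover these maps also satisfy j^k ∘ λ^k + g^k ∘ μ^k = id_{CX^k} and θ^k ∘ λ^k = 0, and μ^k = η^k. (Existence, uniqueness and the equivalence of the two systems of equations (eqc1) and (eqc2) in Section 4 of the paper, together with the identity η_* = μ_*.) -/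
open Function

/-- Section 4, equations (eqc1) and (eqc2): under the cohomology ladder setup, there exist
unique `λ : CX^k → BX^k` and `μ : CX^k → CY^k` satisfying the four equations (eqc1);
moreover they satisfy the equations of (eqc2), and `μ = η`. -/
theorem cohomology_lambda_mu_exist_unique
    (Λ : Type*) [CommRing Λ]
    (R BX BY CX CY : ℤ → Type*)
    [∀ k, AddCommGroup (R k)] [∀ k, Module Λ (R k)]
    [∀ k, AddCommGroup (BX k)] [∀ k, Module Λ (BX k)]
    [∀ k, AddCommGroup (BY k)] [∀ k, Module Λ (BY k)]
    [∀ k, AddCommGroup (CX k)] [∀ k, Module Λ (CX k)]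
    [∀ k, AddCommGroup (CY k)] [∀ k, Module Λ (CY k)]
    (rX : ∀ k, R k →ₗ[Λ] BX k) (j : ∀ k, BX k →ₗ[Λ] CX k) (dX : ∀ k, CX k →ₗ[Λ] R (k+1))
    (rY : ∀ k, R k →ₗ[Λ] BY k) (i : ∀ k, BY k →ₗ[Λ] CY k) (dY : ∀ k, CY k →ₗ[Λ] R (k+1))
    (hXex₁ : ∀ k, Function.Exact (rX k) (j k))
    (hXex₂ : ∀ k, Function.Exact (j k) (dX k))
    (hXex₃ : ∀ k, Function.Exact (dX k) (rX (k+1)))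
    (hYex₁ : ∀ k, Function.Exact (rY k) (i k))
    (hYex₂ : ∀ k, Function.Exact (i k) (dY k))
    (hYex₃ : ∀ k, Function.Exact (dY k) (rY (k+1)))
    (f : ∀ k, BY k →ₗ[Λ] BX k) (g : ∀ k, CY k →ₗ[Λ] CX k)
    (hfr : ∀ k, (f k).comp (rY k) = rX k)
    (hjf : ∀ k, (j k).comp (f k) = (g k).comp (i k))
    (hdg : ∀ k, (dX k).comp (g k) = dY k)
    (θ : ∀ k, BX k →ₗ[Λ] BY k) (η : ∀ k, CX k →ₗ[Λ] CY k)
    (hθr : ∀ k, (θ k).comp (rX k) = rY k)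
    (hiθ : ∀ k, (i k).comp (θ k) = (η k).comp (j k))
    (hdη : ∀ k, (dY k).comp (η k) = dX k)
    (hθf : ∀ k, (θ k).comp (f k) = LinearMap.id)
    (hηg : ∀ k, (η k).comp (g k) = LinearMap.id)
    (k : ℤ) :
    (∃! lm : (CX k →ₗ[Λ] BX k) × (CX k →ₗ[Λ] CY k),
        lm.1.comp (j k) + (f k).comp (θ k) = LinearMap.id ∧
        lm.1.comp (g k) = 0 ∧
        lm.2.comp (j k) = (i k).comp (θ k) ∧
        lm.2.comp (g k) = LinearMap.id) ∧
    (∀ lm : (CX k →ₗ[Λ] BX k) × (CX k →ₗ[Λ] CY k),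
        (lm.1.comp (j k) + (f k).comp (θ k) = LinearMap.id ∧
         lm.1.comp (g k) = 0 ∧
         lm.2.comp (j k) = (i k).comp (θ k) ∧
         lm.2.comp (g k) = LinearMap.id) →
        ((j k).comp lm.1 + (g k).comp lm.2 = LinearMap.id ∧
         (θ k).comp lm.1 = 0 ∧
         lm.2 = η k)) := by
  classical
  obtain ⟨m, rfl⟩ : ∃ m, k = m + 1 := ⟨k - 1, by ring⟩
  -- injectivity of j on ker θ
  have hinj : ∀ b : BX (m+1), θ (m+1) b = 0 → j (m+1) b = 0 → b = 0 := by
    intro b hθb hjb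
    obtain ⟨a, ha⟩ := (hXex₁ (m+1) b).mp hjb
    have h1 : θ (m+1) (rX (m+1) a) = rY (m+1) a := LinearMap.congr_fun (hθr (m+1)) a
    rw [ha, hθb] at h1
    obtain ⟨c', hc'⟩ := (hYex₃ m a).mp h1.symm
    have h2 : dX m (g m c') = dY m c' := LinearMap.congr_fun (hdg m) c'
    have h3 : rX (m+1) (dX m (g m c')) = 0 := (hXex₃ m).apply_apply_eq_zero (g m c')
    rw [h2, hc'] at h3
    rw [← ha, h3]
  -- surjectivity of j from ker θ onto ker η
  have hsurj : ∀ c : CX (m+1), η (m+1) c = 0 → ∃ b, θ (m+1) b = 0 ∧ j (m+1) b = c := by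
    intro c hc
    have h1 : dX (m+1) c = 0 := by
      have := LinearMap.congr_fun (hdη (m+1)) c
      rw [LinearMap.comp_apply, hc, map_zero] at this
      exact this.symm
    obtain ⟨b, hb⟩ := (hXex₂ (m+1) c).mp h1
    refine ⟨b - f (m+1) (θ (m+1) b), ?_, ?_⟩
    · have := LinearMap.congr_fun (hθf (m+1)) (θ (m+1) b)
      simp only [LinearMap.comp_apply, LinearMap.id_apply] at this
      rw [map_sub, this, sub_self]
    · have h2 : j (m+1) (f (m+1) (θ (m+1) b)) = g (m+1) (i (m+1) (θ (m+1) b)) :=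
        LinearMap.congr_fun (hjf (m+1)) (θ (m+1) b)
      have h3 : i (m+1) (θ (m+1) b) = η (m+1) (j (m+1) b) := LinearMap.congr_fun (hiθ (m+1)) b
      rw [map_sub, hb, h2, h3, hb, hc, map_zero, sub_zero]
  set K := LinearMap.ker (θ (m+1)) with hK
  set L := LinearMap.ker (η (m+1)) with hL
  have hmapsto : ∀ b ∈ K, j (m+1) b ∈ L := by
    intro b hb
    have h1 : i (m+1) (θ (m+1) b) = η (m+1) (j (m+1) b) := LinearMap.congr_fun (hiθ (m+1)) b
    simp only [hK, hL, LinearMap.mem_ker] at hb ⊢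
    rw [← h1, hb, map_zero]
  set J : K →ₗ[Λ] L := (j (m+1)).restrict hmapsto with hJ
  have hJapp : ∀ x : K, (J x : CX (m+1)) = j (m+1) (x : BX (m+1)) := fun x => rfl
  have hJbij : Function.Bijective J := by
    constructor
    · intro x y hxy
      have h1 : j (m+1) ((x : BX (m+1)) - y) = 0 := by
        rw [map_sub]
        have := congrArg (Subtype.val) hxy
        rw [hJapp, hJapp] at this
        rw [this, sub_self]
      have h2 : θ (m+1) ((x : BX (m+1)) - y) = 0 := by
        rw [map_sub, x.2, y.2, sub_self]
      exact Subtype.ext (sub_eq_zero.mp (hinj _ h2 h1))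
    · rintro ⟨c, hc⟩
      obtain ⟨b, hθb, hjb⟩ := hsurj c hc
      exact ⟨⟨b, hθb⟩, Subtype.ext hjb⟩
  set E := LinearEquiv.ofBijective J hJbij with hE
  have hEapp : ∀ x : K, E x = J x := fun x => rfl
  have hηg' : ∀ y, η (m+1) (g (m+1) y) = y := fun y => LinearMap.congr_fun (hηg (m+1)) y
  have hp : ∀ c : CX (m+1), c - g (m+1) (η (m+1) c) ∈ L := by
    intro c
    simp only [hL, LinearMap.mem_ker, map_sub, hηg', sub_self]
  set pc : CX (m+1) →ₗ[Λ] L :=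
    LinearMap.codRestrict L (LinearMap.id - (g (m+1)).comp (η (m+1)))
      (fun c => by simpa using hp c) with hpc
  have hpcapp : ∀ c : CX (m+1), (pc c : CX (m+1)) = c - g (m+1) (η (m+1) c) := fun c => rfl
  set lam : CX (m+1) →ₗ[Λ] BX (m+1) := K.subtype.comp ((E.symm : L →ₗ[Λ] K).comp pc) with hlam
  have hlamapp : ∀ c : CX (m+1), lam c = ((E.symm (pc c) : K) : BX (m+1)) := fun c => rfl
  have hθlam : ∀ c, θ (m+1) (lam c) = 0 := fun c => (E.symm (pc c)).2
  have hjlam : ∀ c, j (m+1) (lam c) = c - g (m+1) (η (m+1) c) := by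
    intro c
    have h1 : J (E.symm (pc c)) = pc c := by
      have := E.apply_symm_apply (pc c)
      rwa [hEapp] at this
    have := congrArg Subtype.val h1
    rw [hJapp, hpcapp] at this
    rw [hlamapp]
    exact this
  have hlamj : ∀ b : BX (m+1), lam (j (m+1) b) = b - f (m+1) (θ (m+1) b) := by
    intro b
    have hmem : b - f (m+1) (θ (m+1) b) ∈ K := by
      have := LinearMap.congr_fun (hθf (m+1)) (θ (m+1) b)
      simp only [LinearMap.comp_apply, LinearMap.id_apply] at this
      simp only [hK, LinearMap.mem_ker, map_sub, this, sub_self]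
    have h2 : j (m+1) (f (m+1) (θ (m+1) b)) = g (m+1) (i (m+1) (θ (m+1) b)) :=
      LinearMap.congr_fun (hjf (m+1)) (θ (m+1) b)
    have h3 : i (m+1) (θ (m+1) b) = η (m+1) (j (m+1) b) := LinearMap.congr_fun (hiθ (m+1)) b
    have h4 : E ⟨b - f (m+1) (θ (m+1) b), hmem⟩ = pc (j (m+1) b) := by
      apply Subtype.ext
      rw [hEapp, hJapp, hpcapp]
      rw [map_sub, h2, h3]
    have h5 : E.symm (pc (j (m+1) b)) = ⟨b - f (m+1) (θ (m+1) b), hmem⟩ := by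
      rw [← h4, E.symm_apply_apply]
    rw [hlamapp, h5]
  have hlamg : ∀ y : CY (m+1), lam (g (m+1) y) = 0 := by
    intro y
    have h1 : pc (g (m+1) y) = 0 := by
      apply Subtype.ext
      rw [hpcapp, hηg', sub_self]; rfl
    rw [hlamapp, h1, map_zero]; rfl
  -- eqc1 for (lam, η)
  have P1 : lam.comp (j (m+1)) + (f (m+1)).comp (θ (m+1)) = LinearMap.id := by
    apply LinearMap.ext; intro b
    simp only [LinearMap.add_apply, LinearMap.comp_apply, LinearMap.id_apply, hlamj]
    abel
  have P2 : lam.comp (g (m+1)) = 0 := by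
    apply LinearMap.ext; intro y
    simp only [LinearMap.comp_apply, LinearMap.zero_apply, hlamg]
  have P3 : (η (m+1)).comp (j (m+1)) = (i (m+1)).comp (θ (m+1)) := (hiθ (m+1)).symm
  have P4 : (η (m+1)).comp (g (m+1)) = LinearMap.id := hηg (m+1)
  -- decomposition
  have hdec : ∀ c : CX (m+1), c = j (m+1) (lam c) + g (m+1) (η (m+1) c) := by
    intro c
    rw [hjlam]; abel
  have huniq : ∀ lm : (CX (m+1) →ₗ[Λ] BX (m+1)) × (CX (m+1) →ₗ[Λ] CY (m+1)),
      (lm.1.comp (j (m+1)) + (f (m+1)).comp (θ (m+1)) = LinearMap.id ∧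
       lm.1.comp (g (m+1)) = 0 ∧
       lm.2.comp (j (m+1)) = (i (m+1)).comp (θ (m+1)) ∧
       lm.2.comp (g (m+1)) = LinearMap.id) → lm = (lam, η (m+1)) := by
    rintro ⟨l, u⟩ ⟨h1, h2, h3, h4⟩
    have hl : l = lam := by
      apply LinearMap.ext; intro c
      have e1 := LinearMap.congr_fun h1 (lam c)
      have e2 := LinearMap.congr_fun h2 (η (m+1) c)
      simp only [LinearMap.add_apply, LinearMap.comp_apply, LinearMap.id_apply] at e1
      simp only [LinearMap.comp_apply, LinearMap.zero_apply] at e2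
      calc l c = l (j (m+1) (lam c)) + l (g (m+1) (η (m+1) c)) := by
            rw [← map_add, ← hdec c]
        _ = lam c := by
            rw [e2, add_zero]
            have : l (j (m+1) (lam c)) = lam c - f (m+1) (θ (m+1) (lam c)) := by
              rw [eq_sub_iff_add_eq, e1]
            rw [this, hθlam, map_zero, sub_zero]
    have hu : u = η (m+1) := by
      apply LinearMap.ext; intro c
      have e3 := LinearMap.congr_fun h3 (lam c)
      have e4 := LinearMap.congr_fun h4 (η (m+1) c)
      simp only [LinearMap.comp_apply, LinearMap.id_apply] at e3 e4
      calc u c = u (j (m+1) (lam c)) + u (g (m+1) (η (m+1) c)) := by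
            rw [← map_add, ← hdec c]
        _ = η (m+1) c := by rw [e3, e4, hθlam, map_zero, zero_add]
    rw [hl, hu]
  constructor
  · exact ⟨(lam, η (m+1)), ⟨P1, P2, P3, P4⟩, fun y hy => huniq y hy⟩
  · intro lm hlm
    have := huniq lm hlm
    rw [this]
    refine ⟨?_, ?_, rfl⟩
    · apply LinearMap.ext; intro c
      simp only [LinearMap.add_apply, LinearMap.comp_apply, LinearMap.id_apply, hjlam]
      abel
    · apply LinearMap.ext; intro c
      simp only [LinearMap.comp_apply, LinearMap.zero_apply, hθlam]
end

section
/- Under the cohomology ladder setup, fix an integer k and let λ^k : CX^k → BX^k be the unique Λ-linear map satisfying λ^k ∘ j^k + f^k ∘ θ^k = id_{BX^k} and λ^k ∘ g^k = 0. Then g^k is injective, and the Λ-linear map BX^k → BY^k ⊕ (CX^k / g^k(CY^k)) sending x to (θ^k x, class of j^k x) is an isomorphism, whose inverse sends (y, class of w̃) to f^k y + λ^k w̃ (a well-defined assignment since λ^k ∘ g^k = 0). (Proposition 4.2 of the paper, abstracting H^k(X) ≅ H^k(Y) ⊕ H^k(W̃)/H^k(W).) -/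
/-!
Exactness of `BX → CX → R` together with `dX ∘ g ∘ η = dX` shows `CX = j(BX) + g(CY)`, since
`w - g (η w)` lies in `ker dX = range j`. The relation `λ j + f θ = id` says at once that
`(y, [w]) ↦ f y + λ w` is a left inverse of `x ↦ (θ x, [j x])`. For the other composite one needs
`θ λ = 0` and `[j λ w] = [w]`; both are linear identities in `w`, so it suffices to check them on
`j(BX)`, where they follow from `λ j + f θ = id`, `θ f = id` and `j f = g i`, and on `g(CY)`,
where `λ` vanishes.
-/

namespace LinearMap

variable {Λ : Type*} [Ring Λ] {BX BY CX CY R P : Type*}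
  [AddCommGroup BX] [Module Λ BX] [AddCommGroup BY] [Module Λ BY]
  [AddCommGroup CX] [Module Λ CX] [AddCommGroup CY] [Module Λ CY]
  [AddCommGroup R] [Module Λ R] [AddCommGroup P] [Module Λ P]

theorem range_sup_range_eq_top_of_exact {j : BX →ₗ[Λ] CX} {dX : CX →ₗ[Λ] R}
    {g : CY →ₗ[Λ] CX} {η : CX →ₗ[Λ] CY} (hex : Function.Exact j dX) (hdX : dX ∘ₗ g ∘ₗ η = dX) :
    range j ⊔ range g = ⊤ := by
  refine eq_top_iff.mpr fun w _ =>
    Submodule.mem_sup.mpr ⟨w - g (η w), ?_, g (η w), mem_range_self g _, sub_add_cancel _ _⟩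
  rw [← hex.linearMap_ker_eq, mem_ker, map_sub, sub_eq_zero]
  exact (congr($hdX w)).symm

theorem eq_zero_of_range_sup_eq_top {j : BX →ₗ[Λ] CX} {Q : Submodule Λ CX}
    (htop : range j ⊔ Q = ⊤) {φ : CX →ₗ[Λ] P} (hj : φ ∘ₗ j = 0) (hQ : Q ≤ ker φ) : φ = 0 :=
  ker_eq_top.mp <| top_unique <| htop ▸ sup_le (range_le_ker_iff.mpr hj) hQ

section Splitting

variable {f : BY →ₗ[Λ] BX} {θ : BX →ₗ[Λ] BY} {j : BX →ₗ[Λ] CX} {lam : CX →ₗ[Λ] BX}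
  {Q : Submodule Λ CX}

theorem coprod_liftQ_comp_prod_mkQ (hQ : Q ≤ ker lam) (hlam : lam ∘ₗ j + f ∘ₗ θ = id) :
    f.coprod (Q.liftQ lam hQ) ∘ₗ θ.prod (Q.mkQ ∘ₗ j) = id := by
  ext x
  simpa [add_comm] using congr($hlam x)

variable (htop : range j ⊔ Q = ⊤) (hQ : Q ≤ ker lam) (hlam : lam ∘ₗ j + f ∘ₗ θ = id)
include htop hQ hlam

theorem comp_eq_zero_of_splitting (hθf : θ ∘ₗ f = id) : θ ∘ₗ lam = 0 := by
  refine eq_zero_of_range_sup_eq_top htop ?_ fun w hw => by simp [mem_ker.mp (hQ hw)]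
  calc θ ∘ₗ lam ∘ₗ j = θ ∘ₗ (lam ∘ₗ j + f ∘ₗ θ) - (θ ∘ₗ f) ∘ₗ θ := by
        simp only [comp_add, comp_assoc, add_sub_cancel_right]
    _ = 0 := by rw [hlam, hθf, comp_id, id_comp, sub_self]

theorem mkQ_comp_comp_eq_mkQ_of_splitting (hjf : Q.mkQ ∘ₗ j ∘ₗ f = 0) :
    Q.mkQ ∘ₗ j ∘ₗ lam = Q.mkQ := by
  refine sub_eq_zero.mp <| eq_zero_of_range_sup_eq_top htop ?_ fun w hw => by
    simp [mem_ker.mp (hQ hw), (Submodule.Quotient.mk_eq_zero Q).mpr hw]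
  calc (Q.mkQ ∘ₗ j ∘ₗ lam - Q.mkQ) ∘ₗ j
      = Q.mkQ ∘ₗ j ∘ₗ (lam ∘ₗ j + f ∘ₗ θ) - Q.mkQ ∘ₗ j - (Q.mkQ ∘ₗ j ∘ₗ f) ∘ₗ θ := by
        simp only [sub_comp, comp_add, comp_assoc]; abel
    _ = 0 := by rw [hlam, hjf, zero_comp, comp_id, sub_self, sub_zero]

theorem prod_mkQ_comp_coprod_liftQ (hθf : θ ∘ₗ f = id) (hjf : Q.mkQ ∘ₗ j ∘ₗ f = 0) :
    θ.prod (Q.mkQ ∘ₗ j) ∘ₗ f.coprod (Q.liftQ lam hQ) = id := by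
  ext x
  · simpa using congr($hθf x)
  · simpa using congr($hjf x)
  · simpa using congr($(comp_eq_zero_of_splitting htop hQ hlam hθf) x)
  · simpa using congr($(mkQ_comp_comp_eq_mkQ_of_splitting htop hQ hlam hjf) x)

end Splitting

end LinearMap

theorem cohomology_decomposition_general
    (Λ : Type*) [CommRing Λ]
    (R BX BY CX CY : ℤ → Type*)
    [∀ k, AddCommGroup (R k)] [∀ k, Module Λ (R k)]
    [∀ k, AddCommGroup (BX k)] [∀ k, Module Λ (BX k)]
    [∀ k, AddCommGroup (BY k)] [∀ k, Module Λ (BY k)]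
    [∀ k, AddCommGroup (CX k)] [∀ k, Module Λ (CX k)]
    [∀ k, AddCommGroup (CY k)] [∀ k, Module Λ (CY k)]
    (j : ∀ k, BX k →ₗ[Λ] CX k) (dX : ∀ k, CX k →ₗ[Λ] R (k+1))
    (i : ∀ k, BY k →ₗ[Λ] CY k) (dY : ∀ k, CY k →ₗ[Λ] R (k+1))
    (hXex₂ : ∀ k, Function.Exact (j k) (dX k))
    (f : ∀ k, BY k →ₗ[Λ] BX k) (g : ∀ k, CY k →ₗ[Λ] CX k)
    (hjf : ∀ k, (j k).comp (f k) = (g k).comp (i k))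
    (hdg : ∀ k, (dX k).comp (g k) = dY k)
    (θ : ∀ k, BX k →ₗ[Λ] BY k) (η : ∀ k, CX k →ₗ[Λ] CY k)
    (hdη : ∀ k, (dY k).comp (η k) = dX k)
    (hθf : ∀ k, (θ k).comp (f k) = LinearMap.id)
    (hηg : ∀ k, (η k).comp (g k) = LinearMap.id)
    (k : ℤ)
    (lam : CX k →ₗ[Λ] BX k)
    (hlam₁ : lam.comp (j k) + (f k).comp (θ k) = LinearMap.id)
    (hlam₂ : lam.comp (g k) = 0) :
    Function.Injective ⇑(g k) ∧
    ∃ Ψ : (BY k × (CX k ⧸ LinearMap.range (g k))) →ₗ[Λ] BX k,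
      (∀ (y : BY k) (w : CX k), Ψ (y, Submodule.Quotient.mk w) = f k y + lam w) ∧
      Ψ.comp (LinearMap.prod (θ k) ((LinearMap.range (g k)).mkQ.comp (j k)))
        = LinearMap.id ∧
      (LinearMap.prod (θ k) ((LinearMap.range (g k)).mkQ.comp (j k))).comp Ψ
        = LinearMap.id := by
  have htop : LinearMap.range (j k) ⊔ LinearMap.range (g k) = ⊤ :=
    LinearMap.range_sup_range_eq_top_of_exact (hXex₂ k)
      (by rw [← LinearMap.comp_assoc, hdg k, hdη k])
  have hQ : LinearMap.range (g k) ≤ LinearMap.ker lam := LinearMap.range_le_ker_iff.mpr hlam₂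
  have hmkQjf : (LinearMap.range (g k)).mkQ ∘ₗ j k ∘ₗ f k = 0 := by
    rw [hjf k, ← LinearMap.comp_assoc, LinearMap.range_mkQ_comp, LinearMap.zero_comp]
  exact ⟨LinearMap.injective_of_comp_eq_id _ _ (hηg k),
    (f k).coprod ((LinearMap.range (g k)).liftQ lam hQ), fun _ _ => rfl,
    LinearMap.coprod_liftQ_comp_prod_mkQ hQ hlam₁,
    LinearMap.prod_mkQ_comp_coprod_liftQ htop hQ hlam₁ (hθf k) hmkQjf⟩

/-- Proposition 4.2: under the cohomology ladder setup, `g` is injective and the map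
`x ↦ (θ x, class of j x)` is an isomorphism `BX^k ≅ BY^k ⊕ CX^k/g(CY^k)`, with inverse
`(y, class of w̃) ↦ f y + λ w̃`. -/
theorem cohomology_decomposition
    (Λ : Type*) [CommRing Λ]
    (R BX BY CX CY : ℤ → Type*)
    [∀ k, AddCommGroup (R k)] [∀ k, Module Λ (R k)]
    [∀ k, AddCommGroup (BX k)] [∀ k, Module Λ (BX k)]
    [∀ k, AddCommGroup (BY k)] [∀ k, Module Λ (BY k)]
    [∀ k, AddCommGroup (CX k)] [∀ k, Module Λ (CX k)]
    [∀ k, AddCommGroup (CY k)] [∀ k, Module Λ (CY k)]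
    (rX : ∀ k, R k →ₗ[Λ] BX k) (j : ∀ k, BX k →ₗ[Λ] CX k) (dX : ∀ k, CX k →ₗ[Λ] R (k+1))
    (rY : ∀ k, R k →ₗ[Λ] BY k) (i : ∀ k, BY k →ₗ[Λ] CY k) (dY : ∀ k, CY k →ₗ[Λ] R (k+1))
    (hXex₁ : ∀ k, Function.Exact (rX k) (j k))
    (hXex₂ : ∀ k, Function.Exact (j k) (dX k))
    (hXex₃ : ∀ k, Function.Exact (dX k) (rX (k+1)))
    (hYex₁ : ∀ k, Function.Exact (rY k) (i k))
    (hYex₂ : ∀ k, Function.Exact (i k) (dY k))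
    (hYex₃ : ∀ k, Function.Exact (dY k) (rY (k+1)))
    (f : ∀ k, BY k →ₗ[Λ] BX k) (g : ∀ k, CY k →ₗ[Λ] CX k)
    (hfr : ∀ k, (f k).comp (rY k) = rX k)
    (hjf : ∀ k, (j k).comp (f k) = (g k).comp (i k))
    (hdg : ∀ k, (dX k).comp (g k) = dY k)
    (θ : ∀ k, BX k →ₗ[Λ] BY k) (η : ∀ k, CX k →ₗ[Λ] CY k)
    (hθr : ∀ k, (θ k).comp (rX k) = rY k)
    (hiθ : ∀ k, (i k).comp (θ k) = (η k).comp (j k))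
    (hdη : ∀ k, (dY k).comp (η k) = dX k)
    (hθf : ∀ k, (θ k).comp (f k) = LinearMap.id)
    (hηg : ∀ k, (η k).comp (g k) = LinearMap.id)
    (k : ℤ)
    (lam : CX k →ₗ[Λ] BX k)
    (hlam₁ : lam.comp (j k) + (f k).comp (θ k) = LinearMap.id)
    (hlam₂ : lam.comp (g k) = 0) :
    Function.Injective ⇑(g k) ∧
    ∃ Ψ : (BY k × (CX k ⧸ LinearMap.range (g k))) →ₗ[Λ] BX k,
      (∀ (y : BY k) (w : CX k), Ψ (y, Submodule.Quotient.mk w) = f k y + lam w) ∧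
      Ψ.comp (LinearMap.prod (θ k) ((LinearMap.range (g k)).mkQ.comp (j k)))
        = LinearMap.id ∧
      (LinearMap.prod (θ k) ((LinearMap.range (g k)).mkQ.comp (j k))).comp Ψ
        = LinearMap.id :=
  cohomology_decomposition_general Λ R BX BY CX CY j dX i dY hXex₂ f g hjf hdg θ η hdη hθf hηg k lam
    hlam₁ hlam₂
end

section
/- Under the cohomology ladder setup, fix an integer k and let λ^k : CX^k → BX^k be the unique Λ-linear map satisfying λ^k ∘ j^k + f^k ∘ θ^k = id_{BX^k} and λ^k ∘ g^k = 0. Then j^k restricts to an isomorphism of Λ-modules ker θ^k → ker η^k, whose inverse is the restriction of λ^k. (Kernel isomorphism established in the proof of Proposition 4.2 of the paper.) -/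
open Function

/-- Proof of Proposition 4.2: `j` restricts to an isomorphism `ker θ^k ≅ ker η^k`,
whose inverse is the restriction of `λ`. -/
theorem cohomology_kernel_isomorphism
    (Λ : Type*) [CommRing Λ]
    (R BX BY CX CY : ℤ → Type*)
    [∀ k, AddCommGroup (R k)] [∀ k, Module Λ (R k)]
    [∀ k, AddCommGroup (BX k)] [∀ k, Module Λ (BX k)]
    [∀ k, AddCommGroup (BY k)] [∀ k, Module Λ (BY k)]
    [∀ k, AddCommGroup (CX k)] [∀ k, Module Λ (CX k)]
    [∀ k, AddCommGroup (CY k)] [∀ k, Module Λ (CY k)]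
    (rX : ∀ k, R k →ₗ[Λ] BX k) (j : ∀ k, BX k →ₗ[Λ] CX k) (dX : ∀ k, CX k →ₗ[Λ] R (k+1))
    (rY : ∀ k, R k →ₗ[Λ] BY k) (i : ∀ k, BY k →ₗ[Λ] CY k) (dY : ∀ k, CY k →ₗ[Λ] R (k+1))
    (hXex₁ : ∀ k, Function.Exact (rX k) (j k))
    (hXex₂ : ∀ k, Function.Exact (j k) (dX k))
    (hXex₃ : ∀ k, Function.Exact (dX k) (rX (k+1)))
    (hYex₁ : ∀ k, Function.Exact (rY k) (i k))
    (hYex₂ : ∀ k, Function.Exact (i k) (dY k))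
    (hYex₃ : ∀ k, Function.Exact (dY k) (rY (k+1)))
    (f : ∀ k, BY k →ₗ[Λ] BX k) (g : ∀ k, CY k →ₗ[Λ] CX k)
    (hfr : ∀ k, (f k).comp (rY k) = rX k)
    (hjf : ∀ k, (j k).comp (f k) = (g k).comp (i k))
    (hdg : ∀ k, (dX k).comp (g k) = dY k)
    (θ : ∀ k, BX k →ₗ[Λ] BY k) (η : ∀ k, CX k →ₗ[Λ] CY k)
    (hθr : ∀ k, (θ k).comp (rX k) = rY k)
    (hiθ : ∀ k, (i k).comp (θ k) = (η k).comp (j k))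
    (hdη : ∀ k, (dY k).comp (η k) = dX k)
    (hθf : ∀ k, (θ k).comp (f k) = LinearMap.id)
    (hηg : ∀ k, (η k).comp (g k) = LinearMap.id)
    (k : ℤ)
    (lam : CX k →ₗ[Λ] BX k)
    (hlam₁ : lam.comp (j k) + (f k).comp (θ k) = LinearMap.id)
    (hlam₂ : lam.comp (g k) = 0) :
    (∀ x ∈ LinearMap.ker (θ k), j k x ∈ LinearMap.ker (η k)) ∧
    (∀ w ∈ LinearMap.ker (η k), lam w ∈ LinearMap.ker (θ k)) ∧
    (∀ x ∈ LinearMap.ker (θ k), lam (j k x) = x) ∧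
    (∀ w ∈ LinearMap.ker (η k), j k (lam w) = w) := by
  have Hdη : ∀ w : CX k, dY k (η k w) = dX k w := fun w => LinearMap.congr_fun (hdη k) w
  have Hiθ : ∀ x : BX k, i k (θ k x) = η k (j k x) := fun x => LinearMap.congr_fun (hiθ k) x
  have Hjf : ∀ y : BY k, j k (f k y) = g k (i k y) := fun y => LinearMap.congr_fun (hjf k) y
  have Hθf : ∀ y : BY k, θ k (f k y) = y := fun y => LinearMap.congr_fun (hθf k) y
  have lam_j : ∀ x : BX k, lam (j k x) = x - f k (θ k x) := by
    intro x
    have h : lam (j k x) + f k (θ k x) = x := LinearMap.congr_fun hlam₁ x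
    exact eq_sub_of_add_eq h
  have key : ∀ w : CX k, η k w = 0 → ∃ x : BX k, θ k x = 0 ∧ j k x = w := by
    intro w hw
    have hd : dX k w = 0 := by rw [← Hdη w, hw, map_zero]
    obtain ⟨x, hx⟩ := ((hXex₂ k) w).mp hd
    have hiθx : i k (θ k x) = 0 := by rw [Hiθ x, hx]; exact hw
    obtain ⟨r, hr⟩ := ((hYex₁ k) (θ k x)).mp hiθx
    have hirY : i k (rY k r) = 0 := ((hYex₁ k) (rY k r)).mpr ⟨r, rfl⟩
    refine ⟨x - f k (rY k r), ?_, ?_⟩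
    · rw [map_sub, Hθf (rY k r), hr, sub_self]
    · rw [map_sub, Hjf (rY k r), hirY, map_zero, sub_zero, hx]
  refine ⟨?_, ?_, ?_, ?_⟩
  · intro x hx
    have hx0 : θ k x = 0 := hx
    show η k (j k x) = 0
    rw [← Hiθ x, hx0, map_zero]
  · intro w hw
    obtain ⟨x, hθx, hjx⟩ := key w hw
    show θ k (lam w) = 0
    rw [← hjx, lam_j x, hθx, map_zero, sub_zero, hθx]
  · intro x hx
    rw [lam_j x, (hx : θ k x = 0), map_zero, sub_zero]
  · intro w hw
    obtain ⟨x, hθx, hjx⟩ := key w hw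
    rw [← hjx, lam_j x, hθx, map_zero, sub_zero]
end

section
/- Under the homology ladder setup, for every integer k the sequence 0 → CY_k → CX_k ⊕ BY_k → BX_k → 0, in which the first map is w ↦ (η_k w, −i_k w) and the second map is (w̃, y) ↦ j_k w̃ + θ_k y, is a short exact sequence of Λ-modules; moreover the map (w̃, y) ↦ g_k w̃ is a left section of the first map. (The exact sequence established in Section 4 of the paper, abstracting 0 → H_k(W) → H_k(W̃) ⊕ H_k(Y) → H_k(X) → 0.) -/
open Function

/-- Section 4: under the homology ladder setup, for every `k` the sequence
`0 → CY_k → CX_k ⊕ BY_k → BX_k → 0`, with maps `w ↦ (η w, -i w)` and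
`(w̃, y) ↦ j w̃ + θ y`, is short exact, and `(w̃, y) ↦ g w̃` is a left section of
the first map. -/
theorem homology_short_exact_sequence
    (Λ : Type*) [CommRing Λ]
    (U BX BY CX CY : ℤ → Type*)
    [∀ k, AddCommGroup (U k)] [∀ k, Module Λ (U k)]
    [∀ k, AddCommGroup (BX k)] [∀ k, Module Λ (BX k)]
    [∀ k, AddCommGroup (BY k)] [∀ k, Module Λ (BY k)]
    [∀ k, AddCommGroup (CX k)] [∀ k, Module Λ (CX k)]
    [∀ k, AddCommGroup (CY k)] [∀ k, Module Λ (CY k)]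
    (dX : ∀ k, U (k+1) →ₗ[Λ] CX k) (j : ∀ k, CX k →ₗ[Λ] BX k) (sX : ∀ k, BX k →ₗ[Λ] U k)
    (dY : ∀ k, U (k+1) →ₗ[Λ] CY k) (i : ∀ k, CY k →ₗ[Λ] BY k) (sY : ∀ k, BY k →ₗ[Λ] U k)
    (hXex₁ : ∀ k, Function.Exact (dX k) (j k))
    (hXex₂ : ∀ k, Function.Exact (j k) (sX k))
    (hXex₃ : ∀ k, Function.Exact (sX (k+1)) (dX k))
    (hYex₁ : ∀ k, Function.Exact (dY k) (i k))
    (hYex₂ : ∀ k, Function.Exact (i k) (sY k))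
    (hYex₃ : ∀ k, Function.Exact (sY (k+1)) (dY k))
    (g : ∀ k, CX k →ₗ[Λ] CY k) (f : ∀ k, BX k →ₗ[Λ] BY k)
    (hgd : ∀ k, (g k).comp (dX k) = dY k)
    (hig : ∀ k, (i k).comp (g k) = (f k).comp (j k))
    (hsf : ∀ k, (sY k).comp (f k) = sX k)
    (η : ∀ k, CY k →ₗ[Λ] CX k) (θ : ∀ k, BY k →ₗ[Λ] BX k)
    (hηd : ∀ k, (η k).comp (dY k) = dX k)
    (hjη : ∀ k, (j k).comp (η k) = (θ k).comp (i k))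
    (hsθ : ∀ k, (sX k).comp (θ k) = sY k)
    (hfθ : ∀ k, (f k).comp (θ k) = LinearMap.id)
    (hgη : ∀ k, (g k).comp (η k) = LinearMap.id)
    (k : ℤ) :
    Function.Injective ⇑(LinearMap.prod (η k) (-(i k))) ∧
    Function.Exact ⇑(LinearMap.prod (η k) (-(i k))) ⇑(LinearMap.coprod (j k) (θ k)) ∧
    Function.Surjective ⇑(LinearMap.coprod (j k) (θ k)) ∧
    (∀ w : CY k, g k (LinearMap.prod (η k) (-(i k)) w).1 = w) := by
  have hgηp : ∀ w, g k (η k w) = w := fun w => LinearMap.congr_fun (hgη k) w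
  have hjηp : ∀ w, j k (η k w) = θ k (i k w) := fun w => LinearMap.congr_fun (hjη k) w
  have hsθp : ∀ y, sX k (θ k y) = sY k y := fun y => LinearMap.congr_fun (hsθ k) y
  have hsfp : ∀ x, sY k (f k x) = sX k x := fun x => LinearMap.congr_fun (hsf k) x
  have hηdp : ∀ u, η k (dY k u) = dX k u := fun u => LinearMap.congr_fun (hηd k) u
  refine ⟨?_, ?_, ?_, fun w => by simpa using hgηp w⟩
  · intro a b hab
    have h1 : η k a = η k b := congrArg Prod.fst hab
    calc a = g k (η k a) := (hgηp a).symm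
    _ = g k (η k b) := by rw [h1]
    _ = b := hgηp b
  · intro p
    constructor
    · intro hp
      simp only [LinearMap.coprod_apply] at hp
      -- sX (θ p.2) = 0
      have h0 : sX k (θ k p.2) = 0 := by
        have : sX k (j k p.1 + θ k p.2) = 0 := by rw [hp]; simp
        simpa [map_add, (hXex₂ k).apply_apply_eq_zero p.1] using this
      have h1 : sY k p.2 = 0 := by rw [← hsθp]; exact h0
      obtain ⟨v, hv⟩ := (hYex₂ k p.2).mp h1
      have h2 : j k (p.1 + η k v) = 0 := by
        rw [map_add, hjηp, hv]
        rw [add_comm] at hp ⊢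
        exact hp
      obtain ⟨u, hu⟩ := (hXex₁ k _).mp h2
      refine ⟨dY k u - v, ?_⟩
      have hη : η k (dY k u - v) = p.1 := by
        rw [map_sub, hηdp, hu]; abel
      have hi : -(i k (dY k u - v)) = p.2 := by
        have hdu : i k (dY k u) = 0 := (hYex₁ k).apply_apply_eq_zero u
        rw [map_sub, hdu, hv]; abel
      have hdu : i k (dY k u) = 0 := (hYex₁ k).apply_apply_eq_zero u
      ext
      · simpa using hη
      · simp [map_sub, hdu, hv]
    · rintro ⟨w, rfl⟩
      simp [hjηp w]
  · intro x
    refine ⟨(?_, f k x), ?_⟩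
    · exact Classical.choose ((hXex₂ k (x - θ k (f k x))).mp (by
        simp [map_sub, hsθp, hsfp]))
    · have := Classical.choose_spec ((hXex₂ k (x - θ k (f k x))).mp (by
        simp [map_sub, hsθp, hsfp]))
      simp only [LinearMap.coprod_apply, this]
      abel
end

section
/- Under the homology ladder setup, for every integer k the Λ-linear map ψ : CX_k ⊕ BY_k → BX_k ⊕ CY_k defined by ψ(w̃, y) = (j_k w̃ + θ_k y, g_k w̃) is an isomorphism of Λ-modules. (Proposition 4.3 of the paper, abstracting the cross isomorphism H_k(W̃) ⊕ H_k(Y) ≅ H_k(X) ⊕ H_k(W).) -/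
/-!
Applying `f` to the first component of `ψ(w̃, y)` gives `i (g w̃) + y`, since `f ∘ j = i ∘ g` and
`f ∘ θ = id`; so `ψ(w̃, y) = 0` forces `y = 0`, and then `w̃ ∈ ker j ∩ ker g`. This intersection is zero
because `η ∘ g` fixes `ker j = range ∂X`: `η ∘ g ∘ ∂X = η ∘ ∂Y = ∂X`.

For surjectivity onto `(x, z)`, put `x' = x - θ (i z)`. Then `x' - θ (f x')` is killed by `sX` (as
`sX ∘ θ ∘ f = sY ∘ f = sX`), hence equals `j w` for some `w`, and `i (g w) = f (j w) = 0`. The preimage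
is `(η z + w - η (g w), f x')`: subtracting `η (g w) ∈ ker j` corrects the image under `g` to `z`.
-/

open Function LinearMap

section CrossIsomorphism

variable {R : Type*} [Ring R] {V U CX BX CY BY : Type*}
  [AddCommGroup V] [Module R V] [AddCommGroup U] [Module R U]
  [AddCommGroup CX] [Module R CX] [AddCommGroup BX] [Module R BX]
  [AddCommGroup CY] [Module R CY] [AddCommGroup BY] [Module R BY]
  {dX : V →ₗ[R] CX} {dY : V →ₗ[R] CY} {sX : BX →ₗ[R] U} {sY : BY →ₗ[R] U}
  {i : CY →ₗ[R] BY} {f : BX →ₗ[R] BY} {η : CY →ₗ[R] CX}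

def crossMap (j : CX →ₗ[R] BX) (θ : BY →ₗ[R] BX) (g : CX →ₗ[R] CY) : CX × BY →ₗ[R] BX × CY :=
  (j.coprod θ).prod (g ∘ₗ fst R CX BY)

variable {j : CX →ₗ[R] BX} {θ : BY →ₗ[R] BX} {g : CX →ₗ[R] CY}

@[simp]
theorem crossMap_apply (p : CX × BY) : crossMap j θ g p = (j p.1 + θ p.2, g p.1) := rfl

theorem disjoint_ker_of_exact (hX : Exact dX j) (hgd : g ∘ₗ dX = dY) (hηd : η ∘ₗ dY = dX) :
    Disjoint (ker j) (ker g) := by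
  rw [Submodule.disjoint_def]
  intro w hj hg
  obtain ⟨u, rfl⟩ := (hX w).mp hj
  calc dX u = η (dY u) := congr($hηd u).symm
    _ = η (g (dX u)) := by rw [← hgd, LinearMap.comp_apply]
    _ = 0 := by rw [mem_ker.mp hg, map_zero]

theorem crossMap_injective (hX : Exact dX j) (hgd : g ∘ₗ dX = dY) (hηd : η ∘ₗ dY = dX)
    (hig : i ∘ₗ g = f ∘ₗ j) (hfθ : f ∘ₗ θ = LinearMap.id) : Injective (crossMap j θ g) := by
  rw [injective_iff_map_eq_zero]
  rintro ⟨w, y⟩ h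
  obtain ⟨hψ₁, hψ₂⟩ : j w + θ y = 0 ∧ g w = 0 := by simpa using h
  have hy : y = 0 :=
    calc y = f (j w + θ y) := by
          rw [map_add, ← LinearMap.comp_apply f j, ← hig, LinearMap.comp_apply, hψ₂, map_zero,
            zero_add, ← LinearMap.comp_apply f θ, hfθ, id_apply]
      _ = 0 := by rw [hψ₁, map_zero]
  subst hy
  rw [map_zero, add_zero] at hψ₁
  have hw : w = 0 := Submodule.disjoint_def.mp (disjoint_ker_of_exact hX hgd hηd) w hψ₁ hψ₂
  simp [hw]

theorem sub_apply_apply_mem_range_of_exact (hX : Exact j sX) (hsf : sY ∘ₗ f = sX)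
    (hsθ : sX ∘ₗ θ = sY) (x : BX) : x - θ (f x) ∈ range j :=
  (hX _).mp <| by
    rw [map_sub, ← LinearMap.comp_apply sX θ, hsθ, ← LinearMap.comp_apply sY f, hsf, sub_self]

theorem crossMap_surjective (hX : Exact j sX) (hsf : sY ∘ₗ f = sX) (hsθ : sX ∘ₗ θ = sY)
    (hig : i ∘ₗ g = f ∘ₗ j) (hfθ : f ∘ₗ θ = LinearMap.id) (hgη : g ∘ₗ η = LinearMap.id)
    (hjη : j ∘ₗ η = θ ∘ₗ i) : Surjective (crossMap j θ g) := by
  have hfθ' (y : BY) : f (θ y) = y := congr($hfθ y)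
  have hgη' (z : CY) : g (η z) = z := congr($hgη z)
  have hjη' (z : CY) : j (η z) = θ (i z) := congr($hjη z)
  rintro ⟨x, z⟩
  set x' := x - θ (i z) with hx'
  obtain ⟨w, hw⟩ := sub_apply_apply_mem_range_of_exact hX hsf hsθ x'
  have higw : i (g w) = 0 := by
    rw [← LinearMap.comp_apply i g, hig, LinearMap.comp_apply, hw, map_sub, hfθ', sub_self]
  refine ⟨(η z + w - η (g w), f x'), ?_⟩
  simp only [crossMap_apply, map_add, map_sub, hgη', hjη', higw, hw, map_zero, Prod.mk.injEq]
  constructor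
  · rw [hx']
    abel
  · abel

end CrossIsomorphism

theorem homology_cross_isomorphism_general
    (Λ : Type*) [CommRing Λ]
    (U BX BY CX CY : ℤ → Type*)
    [∀ k, AddCommGroup (U k)] [∀ k, Module Λ (U k)]
    [∀ k, AddCommGroup (BX k)] [∀ k, Module Λ (BX k)]
    [∀ k, AddCommGroup (BY k)] [∀ k, Module Λ (BY k)]
    [∀ k, AddCommGroup (CX k)] [∀ k, Module Λ (CX k)]
    [∀ k, AddCommGroup (CY k)] [∀ k, Module Λ (CY k)]
    (dX : ∀ k, U (k+1) →ₗ[Λ] CX k) (j : ∀ k, CX k →ₗ[Λ] BX k) (sX : ∀ k, BX k →ₗ[Λ] U k)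
    (dY : ∀ k, U (k+1) →ₗ[Λ] CY k) (i : ∀ k, CY k →ₗ[Λ] BY k) (sY : ∀ k, BY k →ₗ[Λ] U k)
    (hXex₁ : ∀ k, Function.Exact (dX k) (j k))
    (hXex₂ : ∀ k, Function.Exact (j k) (sX k))
    (g : ∀ k, CX k →ₗ[Λ] CY k) (f : ∀ k, BX k →ₗ[Λ] BY k)
    (hgd : ∀ k, (g k).comp (dX k) = dY k)
    (hig : ∀ k, (i k).comp (g k) = (f k).comp (j k))
    (hsf : ∀ k, (sY k).comp (f k) = sX k)
    (η : ∀ k, CY k →ₗ[Λ] CX k) (θ : ∀ k, BY k →ₗ[Λ] BX k)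
    (hηd : ∀ k, (η k).comp (dY k) = dX k)
    (hjη : ∀ k, (j k).comp (η k) = (θ k).comp (i k))
    (hsθ : ∀ k, (sX k).comp (θ k) = sY k)
    (hfθ : ∀ k, (f k).comp (θ k) = LinearMap.id)
    (hgη : ∀ k, (g k).comp (η k) = LinearMap.id)
    (k : ℤ) :
    Function.Bijective
      ⇑(LinearMap.prod (LinearMap.coprod (j k) (θ k))
        ((g k).comp (LinearMap.fst Λ (CX k) (BY k)))) :=
  ⟨crossMap_injective (hXex₁ k) (hgd k) (hηd k) (hig k) (hfθ k),
    crossMap_surjective (hXex₂ k) (hsf k) (hsθ k) (hig k) (hfθ k) (hgη k) (hjη k)⟩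

/-- Proposition 4.3: under the homology ladder setup, the map
`ψ(w̃, y) = (j w̃ + θ y, g w̃)` is an isomorphism `CX_k ⊕ BY_k ≅ BX_k ⊕ CY_k`. -/
theorem homology_cross_isomorphism
    (Λ : Type*) [CommRing Λ]
    (U BX BY CX CY : ℤ → Type*)
    [∀ k, AddCommGroup (U k)] [∀ k, Module Λ (U k)]
    [∀ k, AddCommGroup (BX k)] [∀ k, Module Λ (BX k)]
    [∀ k, AddCommGroup (BY k)] [∀ k, Module Λ (BY k)]
    [∀ k, AddCommGroup (CX k)] [∀ k, Module Λ (CX k)]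
    [∀ k, AddCommGroup (CY k)] [∀ k, Module Λ (CY k)]
    (dX : ∀ k, U (k+1) →ₗ[Λ] CX k) (j : ∀ k, CX k →ₗ[Λ] BX k) (sX : ∀ k, BX k →ₗ[Λ] U k)
    (dY : ∀ k, U (k+1) →ₗ[Λ] CY k) (i : ∀ k, CY k →ₗ[Λ] BY k) (sY : ∀ k, BY k →ₗ[Λ] U k)
    (hXex₁ : ∀ k, Function.Exact (dX k) (j k))
    (hXex₂ : ∀ k, Function.Exact (j k) (sX k))
    (hXex₃ : ∀ k, Function.Exact (sX (k+1)) (dX k))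
    (hYex₁ : ∀ k, Function.Exact (dY k) (i k))
    (hYex₂ : ∀ k, Function.Exact (i k) (sY k))
    (hYex₃ : ∀ k, Function.Exact (sY (k+1)) (dY k))
    (g : ∀ k, CX k →ₗ[Λ] CY k) (f : ∀ k, BX k →ₗ[Λ] BY k)
    (hgd : ∀ k, (g k).comp (dX k) = dY k)
    (hig : ∀ k, (i k).comp (g k) = (f k).comp (j k))
    (hsf : ∀ k, (sY k).comp (f k) = sX k)
    (η : ∀ k, CY k →ₗ[Λ] CX k) (θ : ∀ k, BY k →ₗ[Λ] BX k)
    (hηd : ∀ k, (η k).comp (dY k) = dX k)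
    (hjη : ∀ k, (j k).comp (η k) = (θ k).comp (i k))
    (hsθ : ∀ k, (sX k).comp (θ k) = sY k)
    (hfθ : ∀ k, (f k).comp (θ k) = LinearMap.id)
    (hgη : ∀ k, (g k).comp (η k) = LinearMap.id)
    (k : ℤ) :
    Function.Bijective
      ⇑(LinearMap.prod (LinearMap.coprod (j k) (θ k))
        ((g k).comp (LinearMap.fst Λ (CX k) (BY k)))) :=
  homology_cross_isomorphism_general Λ U BX BY CX CY dX j sX dY i sY hXex₁ hXex₂ g f hgd hig hsf η θ
    hηd hjη hsθ hfθ hgη k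
end

section
/- Under the homology ladder setup, for every integer k there exist unique Λ-linear maps λ_k : BX_k → CX_k and μ_k : BX_k → BY_k satisfying j_k ∘ λ_k + θ_k ∘ μ_k = id_{BX_k} and g_k ∘ λ_k = 0. Moreover these maps also satisfy λ_k ∘ j_k + η_k ∘ g_k = id_{CX_k}, λ_k ∘ θ_k = 0, μ_k ∘ j_k = i_k ∘ g_k and μ_k ∘ θ_k = id_{BY_k}, and μ_k = f_k. (Existence, uniqueness and the equivalence of the two systems of equations (eqo1) and (eqo2) in Section 4 of the paper, together with the identity μ^* = f_*.) -/
open Function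

/-- Section 4, equations (eqo1) and (eqo2): under the homology ladder setup, there exist
unique `λ : BX_k → CX_k` and `μ : BX_k → BY_k` with `j ∘ λ + θ ∘ μ = id` and
`g ∘ λ = 0`; moreover they satisfy the remaining equations of (eqo1)/(eqo2),
and `μ = f`. -/
theorem homology_lambda_mu_exist_unique
    (Λ : Type*) [CommRing Λ]
    (U BX BY CX CY : ℤ → Type*)
    [∀ k, AddCommGroup (U k)] [∀ k, Module Λ (U k)]
    [∀ k, AddCommGroup (BX k)] [∀ k, Module Λ (BX k)]
    [∀ k, AddCommGroup (BY k)] [∀ k, Module Λ (BY k)]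
    [∀ k, AddCommGroup (CX k)] [∀ k, Module Λ (CX k)]
    [∀ k, AddCommGroup (CY k)] [∀ k, Module Λ (CY k)]
    (dX : ∀ k, U (k+1) →ₗ[Λ] CX k) (j : ∀ k, CX k →ₗ[Λ] BX k) (sX : ∀ k, BX k →ₗ[Λ] U k)
    (dY : ∀ k, U (k+1) →ₗ[Λ] CY k) (i : ∀ k, CY k →ₗ[Λ] BY k) (sY : ∀ k, BY k →ₗ[Λ] U k)
    (hXex₁ : ∀ k, Function.Exact (dX k) (j k))
    (hXex₂ : ∀ k, Function.Exact (j k) (sX k))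
    (hXex₃ : ∀ k, Function.Exact (sX (k+1)) (dX k))
    (hYex₁ : ∀ k, Function.Exact (dY k) (i k))
    (hYex₂ : ∀ k, Function.Exact (i k) (sY k))
    (hYex₃ : ∀ k, Function.Exact (sY (k+1)) (dY k))
    (g : ∀ k, CX k →ₗ[Λ] CY k) (f : ∀ k, BX k →ₗ[Λ] BY k)
    (hgd : ∀ k, (g k).comp (dX k) = dY k)
    (hig : ∀ k, (i k).comp (g k) = (f k).comp (j k))
    (hsf : ∀ k, (sY k).comp (f k) = sX k)
    (η : ∀ k, CY k →ₗ[Λ] CX k) (θ : ∀ k, BY k →ₗ[Λ] BX k)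
    (hηd : ∀ k, (η k).comp (dY k) = dX k)
    (hjη : ∀ k, (j k).comp (η k) = (θ k).comp (i k))
    (hsθ : ∀ k, (sX k).comp (θ k) = sY k)
    (hfθ : ∀ k, (f k).comp (θ k) = LinearMap.id)
    (hgη : ∀ k, (g k).comp (η k) = LinearMap.id)
    (k : ℤ) :
    (∃! lm : (BX k →ₗ[Λ] CX k) × (BX k →ₗ[Λ] BY k),
        (j k).comp lm.1 + (θ k).comp lm.2 = LinearMap.id ∧
        (g k).comp lm.1 = 0) ∧
    (∀ lm : (BX k →ₗ[Λ] CX k) × (BX k →ₗ[Λ] BY k),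
        ((j k).comp lm.1 + (θ k).comp lm.2 = LinearMap.id ∧
         (g k).comp lm.1 = 0) →
        (lm.1.comp (j k) + (η k).comp (g k) = LinearMap.id ∧
         lm.1.comp (θ k) = 0 ∧
         lm.2.comp (j k) = (i k).comp (g k) ∧
         lm.2.comp (θ k) = LinearMap.id ∧
         lm.2 = f k)) := by

  classical
  -- pointwise versions of hypotheses
  have Hgd : ∀ u, g k (dX k u) = dY k u := fun u => LinearMap.congr_fun (hgd k) u
  have Hig : ∀ c, i k (g k c) = f k (j k c) := fun c => LinearMap.congr_fun (hig k) c
  have Hsf : ∀ x, sY k (f k x) = sX k x := fun x => LinearMap.congr_fun (hsf k) x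
  have Hηd : ∀ u, η k (dY k u) = dX k u := fun u => LinearMap.congr_fun (hηd k) u
  have Hjη : ∀ c, j k (η k c) = θ k (i k c) := fun c => LinearMap.congr_fun (hjη k) c
  have Hsθ : ∀ y, sX k (θ k y) = sY k y := fun y => LinearMap.congr_fun (hsθ k) y
  have Hfθ : ∀ y, f k (θ k y) = y := fun y => LinearMap.congr_fun (hfθ k) y
  have Hgη : ∀ c, g k (η k c) = c := fun c => LinearMap.congr_fun (hgη k) c
  -- key vanishing lemma
  have zero : ∀ a : CX k, j k a = 0 → g k a = 0 → a = 0 := by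
    intro a hj hg
    obtain ⟨u, hu⟩ := (hXex₁ k a).mp hj
    have h1 : dY k u = 0 := by rw [← Hgd, hu, hg]
    rw [← hu, ← Hηd, h1, map_zero]
  -- existence of preimages
  have hker : ∀ x : BX k, ∃ c, j k c = x - θ k (f k x) := by
    intro x
    have hs : sX k (x - θ k (f k x)) = 0 := by
      rw [map_sub, Hsθ, Hsf, sub_self]
    exact (hXex₂ k _).mp hs
  have hc : ∀ x, j k ((hker x).choose) = x - θ k (f k x) := fun x => (hker x).choose_spec
  have key : ∀ a b : CX k, j k a = j k b → a - η k (g k a) = b - η k (g k b) := by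
    intro a b hab
    have hj0 : j k (a - b) = 0 := by rw [map_sub, hab, sub_self]
    obtain ⟨u, hu⟩ := (hXex₁ k (a - b)).mp hj0
    have : η k (g k (a - b)) = a - b := by rw [← hu, Hgd, Hηd]
    have h2 : η k (g k a) - η k (g k b) = a - b := by
      rw [← map_sub, ← map_sub]; exact this
    abel_nf
    linear_combination (norm := abel) -h2
  -- construct lambda
  set lam : BX k →ₗ[Λ] CX k :=
    { toFun := fun x => (hker x).choose - η k (g k ((hker x).choose))
      map_add' := by
        intro x y
        have hj : j k ((hker (x + y)).choose) = j k ((hker x).choose + (hker y).choose) := by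
          rw [(hker (x + y)).choose_spec, map_add (j k), (hker x).choose_spec,
            (hker y).choose_spec, map_add (f k), map_add (θ k)]
          abel
        calc (hker (x+y)).choose - η k (g k ((hker (x+y)).choose))
            = ((hker x).choose + (hker y).choose)
              - η k (g k ((hker x).choose + (hker y).choose)) := key _ _ hj
          _ = _ := by rw [map_add, map_add]; abel
      map_smul' := by
        intro r x
        have hj : j k ((hker (r • x)).choose) = j k (r • (hker x).choose) := by
          rw [(hker (r • x)).choose_spec, map_smul (j k), (hker x).choose_spec,
            map_smul (f k), map_smul (θ k), smul_sub]
        calc (hker (r • x)).choose - η k (g k ((hker (r • x)).choose))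
            = (r • (hker x).choose) - η k (g k (r • (hker x).choose)) := key _ _ hj
          _ = _ := by rw [map_smul, map_smul, ← smul_sub]; rfl } with hlam
  have hlam1 : ∀ x, j k (lam x) = x - θ k (f k x) := by
    intro x
    show j k ((hker x).choose - η k (g k ((hker x).choose))) = _
    rw [map_sub, hc, Hjη, Hig, hc, map_sub, Hfθ, sub_self, map_zero, sub_zero]
  have hlam2 : ∀ x, g k (lam x) = 0 := by
    intro x
    show g k ((hker x).choose - η k (g k ((hker x).choose))) = 0
    rw [map_sub, Hgη, sub_self]
  -- the pair (lam, f k) satisfies the system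
  have hsys : (j k).comp lam + (θ k).comp (f k) = LinearMap.id ∧ (g k).comp lam = 0 := by
    constructor
    · ext x
      simp only [LinearMap.add_apply, LinearMap.comp_apply, LinearMap.id_apply, hlam1]
      abel
    · ext x
      simp [hlam2]
  -- second part: any solution satisfies all equations
  have main : ∀ lm : (BX k →ₗ[Λ] CX k) × (BX k →ₗ[Λ] BY k),
      ((j k).comp lm.1 + (θ k).comp lm.2 = LinearMap.id ∧ (g k).comp lm.1 = 0) →
      (lm.1.comp (j k) + (η k).comp (g k) = LinearMap.id ∧
       lm.1.comp (θ k) = 0 ∧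
       lm.2.comp (j k) = (i k).comp (g k) ∧
       lm.2.comp (θ k) = LinearMap.id ∧
       lm.2 = f k) := by
    rintro ⟨l, m⟩ ⟨h1, h2⟩
    simp only at *
    have H1 : ∀ x, j k (l x) + θ k (m x) = x := fun x => LinearMap.congr_fun h1 x
    have H2 : ∀ x, g k (l x) = 0 := fun x => LinearMap.congr_fun h2 x
    have hmf : m = f k := by
      ext x
      have := congrArg (f k) (H1 x)
      rw [map_add, ← Hig, H2, map_zero, zero_add, Hfθ] at this
      exact this
    subst hmf
    have Hjl : ∀ x, j k (l x) = x - θ k (f k x) := by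
      intro x; have := H1 x; linear_combination (norm := abel) this
    refine ⟨?_, ?_, ?_, ?_, rfl⟩
    · ext c
      simp only [LinearMap.add_apply, LinearMap.comp_apply, LinearMap.id_apply]
      have ha : l (j k c) + η k (g k c) - c = 0 := by
        apply zero
        · rw [map_sub, map_add, Hjl, Hjη, Hig]
          abel
        · rw [map_sub, map_add, H2, Hgη, zero_add, sub_self]
      linear_combination (norm := abel) ha
    · ext y
      simp only [LinearMap.comp_apply, LinearMap.zero_apply]
      apply zero
      · rw [Hjl, Hfθ, sub_self]
      · exact H2 _
    · ext c
      simp only [LinearMap.comp_apply]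
      exact (Hig c).symm
    · exact hfθ k
  refine ⟨⟨(lam, f k), hsys, ?_⟩, main⟩
  rintro ⟨l, m⟩ hlm
  obtain ⟨-, -, -, -, hm⟩ := main (l, m) hlm
  simp only at hm
  have H1 : ∀ x, j k (l x) + θ k (m x) = x := fun x => LinearMap.congr_fun hlm.1 x
  have H2 : ∀ x, g k (l x) = 0 := fun x => LinearMap.congr_fun hlm.2 x
  have hl : l = lam := by
    ext x
    have h0 : l x - lam x = 0 := by
      apply zero
      · rw [map_sub, hlam1]
        have := H1 x
        rw [hm] at this
        linear_combination (norm := abel) this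
      · rw [map_sub, H2, hlam2, sub_self]
    linear_combination (norm := abel) h0
  simp [hl, hm]
end

section
/- Under the homology ladder setup, fix an integer k and let λ_k : BX_k → CX_k be the unique Λ-linear map satisfying j_k ∘ λ_k + θ_k ∘ f_k = id_{BX_k} and g_k ∘ λ_k = 0. Then η_k is injective, and the Λ-linear map BX_k → BY_k ⊕ (CX_k / η_k(CY_k)) sending x to (f_k x, class of λ_k x) is an isomorphism, whose inverse sends (y, class of w̃) to θ_k y + j_k λ_k j_k w̃ (a well-defined assignment, using j_k ∘ η_k = θ_k ∘ i_k and λ_k ∘ θ_k = 0). (Proposition 4.4 of the paper, abstracting H_k(X) ≅ H_k(Y) ⊕ H_k(W̃)/H_k(W).) -/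
/-!
Exactness of `U → CX → BX` together with `η ∘ dY = dX` puts `ker j` inside `range η`, on which
`g` is injective, so an element of `CX` is determined by its images under `j` and `g`. This
yields `λ ∘ θ = 0`, and `λ (j w) = w` whenever `g w = 0`. Splitting
`w = (w - η (g w)) + η (g w)` then shows `λ (j w) ≡ w` modulo `range η`, which together with
`f ∘ θ = id` and `f ∘ j ∘ λ = i ∘ g ∘ λ = 0` makes the two maps mutually inverse.
-/

open Function
open LinearMap (ker range mem_ker)

namespace HomologyLadder

variable {R : Type*} [Ring R] {U BX BY CX CY : Type*}
  [AddCommGroup U] [Module R U] [AddCommGroup BX] [Module R BX] [AddCommGroup BY] [Module R BY]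
  [AddCommGroup CX] [Module R CX] [AddCommGroup CY] [Module R CY]
  {j : CX →ₗ[R] BX} {i : CY →ₗ[R] BY} {g : CX →ₗ[R] CY} {f : BX →ₗ[R] BY}
  {η : CY →ₗ[R] CX} {θ : BY →ₗ[R] BX} {lam : BX →ₗ[R] CX}

theorem ker_le_range_of_exact {dX : U →ₗ[R] CX} {dY : U →ₗ[R] CY} (hex : Exact dX j)
    (hηd : η ∘ₗ dY = dX) : ker j ≤ range η :=
  hex.linearMap_ker_eq ▸ hηd ▸ LinearMap.range_comp_le_range dY η

theorem disjoint_ker_of_ker_le_range (hker : ker j ≤ range η) (hgη : g ∘ₗ η = LinearMap.id) :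
    Disjoint (ker j) (ker g) := by
  refine Submodule.disjoint_def.mpr fun x hj hg => ?_
  obtain ⟨c, rfl⟩ := hker hj
  have hc : c = 0 := (LinearMap.congr_fun hgη c).symm.trans hg
  rw [hc, map_zero]

theorem lam_comp_eq_zero (hdisj : Disjoint (ker j) (ker g)) (hfθ : f ∘ₗ θ = LinearMap.id)
    (hlam₁ : j ∘ₗ lam + θ ∘ₗ f = LinearMap.id) (hlam₂ : g ∘ₗ lam = 0) : lam ∘ₗ θ = 0 := by
  ext y
  refine Submodule.disjoint_def.mp hdisj _ ?_ (LinearMap.congr_fun hlam₂ (θ y))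
  have h : j (lam (θ y)) + θ (f (θ y)) = θ y := LinearMap.congr_fun hlam₁ (θ y)
  rw [show f (θ y) = y from LinearMap.congr_fun hfθ y] at h
  exact add_eq_right.mp h

theorem lam_j_eq_self (hdisj : Disjoint (ker j) (ker g)) (hig : i ∘ₗ g = f ∘ₗ j)
    (hlam₁ : j ∘ₗ lam + θ ∘ₗ f = LinearMap.id) (hlam₂ : g ∘ₗ lam = 0) {w : CX} (hw : g w = 0) :
    lam (j w) = w := by
  have h : j (lam (j w)) + θ (f (j w)) = j w := LinearMap.congr_fun hlam₁ (j w)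
  rw [← show i (g w) = f (j w) from LinearMap.congr_fun hig w, hw, map_zero, map_zero,
    add_zero] at h
  rw [← sub_eq_zero]
  refine Submodule.disjoint_def.mp hdisj _ ?_ ?_ <;> rw [mem_ker, map_sub, sub_eq_zero]
  · exact h
  · rw [hw]; exact LinearMap.congr_fun hlam₂ (j w)

theorem range_le_ker_lam_comp (hjη : j ∘ₗ η = θ ∘ₗ i) (hlamθ : lam ∘ₗ θ = 0) :
    range η ≤ ker (lam ∘ₗ j) := by
  rintro _ ⟨c, rfl⟩
  rw [mem_ker, ← LinearMap.comp_apply, LinearMap.comp_assoc, hjη, ← LinearMap.comp_assoc, hlamθ,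
    LinearMap.zero_comp, LinearMap.zero_apply]

theorem lam_j_sub_mem_range (hgη : g ∘ₗ η = LinearMap.id) (hker : range η ≤ ker (lam ∘ₗ j))
    (hlamj : ∀ w, g w = 0 → lam (j w) = w) (w : CX) : lam (j w) - w ∈ range η := by
  have hg : g (w - η (g w)) = 0 := by
    rw [map_sub, show g (η (g w)) = g w from LinearMap.congr_fun hgη (g w), sub_self]
  have hsplit : lam (j w) = w - η (g w) := by
    rw [← hlamj _ hg, map_sub j, map_sub lam, show lam (j (η (g w))) = 0 from hker ⟨g w, rfl⟩,
      sub_zero]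
  exact ⟨-g w, by rw [hsplit, map_neg]; abel⟩

variable (f θ lam η)

def decomp : BX →ₗ[R] BY × (CX ⧸ range η) :=
  f.prod ((range η).mkQ ∘ₗ lam)

def decompInv (hjη : j ∘ₗ η = θ ∘ₗ i) (hlamθ : lam ∘ₗ θ = 0) :
    BY × (CX ⧸ range η) →ₗ[R] BX :=
  θ.coprod (j ∘ₗ (range η).liftQ (lam ∘ₗ j) (range_le_ker_lam_comp hjη hlamθ))

variable {f θ lam η}

theorem decomp_apply (x : BX) : decomp f η lam x = (f x, Submodule.Quotient.mk (lam x)) := rfl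

theorem decompInv_apply_mk (hjη : j ∘ₗ η = θ ∘ₗ i) (hlamθ : lam ∘ₗ θ = 0) (y : BY) (w : CX) :
    decompInv η θ lam hjη hlamθ (y, Submodule.Quotient.mk w) = θ y + j (lam (j w)) := rfl

theorem decompInv_comp_decomp (hdisj : Disjoint (ker j) (ker g)) (hig : i ∘ₗ g = f ∘ₗ j)
    (hjη : j ∘ₗ η = θ ∘ₗ i) (hlam₁ : j ∘ₗ lam + θ ∘ₗ f = LinearMap.id) (hlam₂ : g ∘ₗ lam = 0)
    (hlamθ : lam ∘ₗ θ = 0) : decompInv η θ lam hjη hlamθ ∘ₗ decomp f η lam = LinearMap.id := by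
  ext x
  have hx : lam (j (lam x)) = lam x :=
    lam_j_eq_self hdisj hig hlam₁ hlam₂ (LinearMap.congr_fun hlam₂ x)
  rw [LinearMap.comp_apply, decomp_apply, decompInv_apply_mk, hx, add_comm]
  exact LinearMap.congr_fun hlam₁ x

theorem decomp_comp_decompInv (hdisj : Disjoint (ker j) (ker g)) (hig : i ∘ₗ g = f ∘ₗ j)
    (hgη : g ∘ₗ η = LinearMap.id) (hfθ : f ∘ₗ θ = LinearMap.id) (hjη : j ∘ₗ η = θ ∘ₗ i)
    (hlam₁ : j ∘ₗ lam + θ ∘ₗ f = LinearMap.id) (hlam₂ : g ∘ₗ lam = 0) (hlamθ : lam ∘ₗ θ = 0) :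
    decomp f η lam ∘ₗ decompInv η θ lam hjη hlamθ = LinearMap.id := by
  have hlamj (w : CX) : g w = 0 → lam (j w) = w := lam_j_eq_self hdisj hig hlam₁ hlam₂
  have hglam (x : BX) : g (lam x) = 0 := LinearMap.congr_fun hlam₂ x
  refine LinearMap.ext fun ⟨y, q⟩ => ?_
  obtain ⟨w, rfl⟩ := Submodule.Quotient.mk_surjective _ q
  have hfθy : f (θ y) = y := LinearMap.congr_fun hfθ y
  have hlamθy : lam (θ y) = 0 := LinearMap.congr_fun hlamθ y
  have hfj (x : BX) : f (j (lam x)) = 0 := by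
    rw [← show i (g (lam x)) = f (j (lam x)) from LinearMap.congr_fun hig _, hglam, map_zero]
  rw [LinearMap.comp_apply, decompInv_apply_mk, decomp_apply, LinearMap.id_apply]
  refine Prod.ext ?_ ?_
  · rw [map_add, hfθy, hfj, add_zero]
  · change Submodule.Quotient.mk (lam _) = Submodule.Quotient.mk w
    rw [map_add, hlamθy, zero_add, hlamj _ (hglam _), Submodule.Quotient.eq]
    exact lam_j_sub_mem_range hgη (range_le_ker_lam_comp hjη hlamθ) hlamj w

end HomologyLadder

open HomologyLadder in
theorem homology_decomposition_general
    (Λ : Type*) [CommRing Λ]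
    (U BX BY CX CY : ℤ → Type*)
    [∀ k, AddCommGroup (U k)] [∀ k, Module Λ (U k)]
    [∀ k, AddCommGroup (BX k)] [∀ k, Module Λ (BX k)]
    [∀ k, AddCommGroup (BY k)] [∀ k, Module Λ (BY k)]
    [∀ k, AddCommGroup (CX k)] [∀ k, Module Λ (CX k)]
    [∀ k, AddCommGroup (CY k)] [∀ k, Module Λ (CY k)]
    (dX : ∀ k, U (k+1) →ₗ[Λ] CX k) (j : ∀ k, CX k →ₗ[Λ] BX k)
    (dY : ∀ k, U (k+1) →ₗ[Λ] CY k) (i : ∀ k, CY k →ₗ[Λ] BY k)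
    (hXex₁ : ∀ k, Function.Exact (dX k) (j k))
    (g : ∀ k, CX k →ₗ[Λ] CY k) (f : ∀ k, BX k →ₗ[Λ] BY k)
    (hig : ∀ k, (i k).comp (g k) = (f k).comp (j k))
    (η : ∀ k, CY k →ₗ[Λ] CX k) (θ : ∀ k, BY k →ₗ[Λ] BX k)
    (hηd : ∀ k, (η k).comp (dY k) = dX k)
    (hjη : ∀ k, (j k).comp (η k) = (θ k).comp (i k))
    (hfθ : ∀ k, (f k).comp (θ k) = LinearMap.id)
    (hgη : ∀ k, (g k).comp (η k) = LinearMap.id)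
    (k : ℤ)
    (lam : BX k →ₗ[Λ] CX k)
    (hlam₁ : (j k).comp lam + (θ k).comp (f k) = LinearMap.id)
    (hlam₂ : (g k).comp lam = 0) :
    Function.Injective ⇑(η k) ∧
    ∃ Ψ : (BY k × (CX k ⧸ LinearMap.range (η k))) →ₗ[Λ] BX k,
      (∀ (y : BY k) (w : CX k),
        Ψ (y, Submodule.Quotient.mk w) = θ k y + j k (lam (j k w))) ∧
      Ψ.comp (LinearMap.prod (f k) ((LinearMap.range (η k)).mkQ.comp lam))
        = LinearMap.id ∧
      (LinearMap.prod (f k) ((LinearMap.range (η k)).mkQ.comp lam)).comp Ψ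
        = LinearMap.id := by
  have hdisj := disjoint_ker_of_ker_le_range (ker_le_range_of_exact (hXex₁ k) (hηd k)) (hgη k)
  have hlamθ := lam_comp_eq_zero hdisj (hfθ k) hlam₁ hlam₂
  exact ⟨LeftInverse.injective (LinearMap.congr_fun (hgη k)),
    decompInv (η k) (θ k) lam (hjη k) hlamθ, decompInv_apply_mk (hjη k) hlamθ,
    decompInv_comp_decomp hdisj (hig k) (hjη k) hlam₁ hlam₂ hlamθ,
    decomp_comp_decompInv hdisj (hig k) (hgη k) (hfθ k) (hjη k) hlam₁ hlam₂ hlamθ⟩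

/-- Proposition 4.4: under the homology ladder setup, `η` is injective and the map
`x ↦ (f x, class of λ x)` is an isomorphism `BX_k ≅ BY_k ⊕ CX_k/η(CY_k)`, with inverse
`(y, class of w̃) ↦ θ y + j (λ (j w̃))`. -/
theorem homology_decomposition
    (Λ : Type*) [CommRing Λ]
    (U BX BY CX CY : ℤ → Type*)
    [∀ k, AddCommGroup (U k)] [∀ k, Module Λ (U k)]
    [∀ k, AddCommGroup (BX k)] [∀ k, Module Λ (BX k)]
    [∀ k, AddCommGroup (BY k)] [∀ k, Module Λ (BY k)]
    [∀ k, AddCommGroup (CX k)] [∀ k, Module Λ (CX k)]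
    [∀ k, AddCommGroup (CY k)] [∀ k, Module Λ (CY k)]
    (dX : ∀ k, U (k+1) →ₗ[Λ] CX k) (j : ∀ k, CX k →ₗ[Λ] BX k) (sX : ∀ k, BX k →ₗ[Λ] U k)
    (dY : ∀ k, U (k+1) →ₗ[Λ] CY k) (i : ∀ k, CY k →ₗ[Λ] BY k) (sY : ∀ k, BY k →ₗ[Λ] U k)
    (hXex₁ : ∀ k, Function.Exact (dX k) (j k))
    (hXex₂ : ∀ k, Function.Exact (j k) (sX k))
    (hXex₃ : ∀ k, Function.Exact (sX (k+1)) (dX k))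
    (hYex₁ : ∀ k, Function.Exact (dY k) (i k))
    (hYex₂ : ∀ k, Function.Exact (i k) (sY k))
    (hYex₃ : ∀ k, Function.Exact (sY (k+1)) (dY k))
    (g : ∀ k, CX k →ₗ[Λ] CY k) (f : ∀ k, BX k →ₗ[Λ] BY k)
    (hgd : ∀ k, (g k).comp (dX k) = dY k)
    (hig : ∀ k, (i k).comp (g k) = (f k).comp (j k))
    (hsf : ∀ k, (sY k).comp (f k) = sX k)
    (η : ∀ k, CY k →ₗ[Λ] CX k) (θ : ∀ k, BY k →ₗ[Λ] BX k)
    (hηd : ∀ k, (η k).comp (dY k) = dX k)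
    (hjη : ∀ k, (j k).comp (η k) = (θ k).comp (i k))
    (hsθ : ∀ k, (sX k).comp (θ k) = sY k)
    (hfθ : ∀ k, (f k).comp (θ k) = LinearMap.id)
    (hgη : ∀ k, (g k).comp (η k) = LinearMap.id)
    (k : ℤ)
    (lam : BX k →ₗ[Λ] CX k)
    (hlam₁ : (j k).comp lam + (θ k).comp (f k) = LinearMap.id)
    (hlam₂ : (g k).comp lam = 0) :
    Function.Injective ⇑(η k) ∧
    ∃ Ψ : (BY k × (CX k ⧸ LinearMap.range (η k))) →ₗ[Λ] BX k,
      (∀ (y : BY k) (w : CX k),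
        Ψ (y, Submodule.Quotient.mk w) = θ k y + j k (lam (j k w))) ∧
      Ψ.comp (LinearMap.prod (f k) ((LinearMap.range (η k)).mkQ.comp lam))
        = LinearMap.id ∧
      (LinearMap.prod (f k) ((LinearMap.range (η k)).mkQ.comp lam)).comp Ψ
        = LinearMap.id :=
  homology_decomposition_general Λ U BX BY CX CY dX j dY i hXex₁ g f hig η θ hηd hjη hfθ hgη k lam
    hlam₁ hlam₂
end

section
/- Under the homology ladder setup, fix an integer k and let λ_k : BX_k → CX_k be the unique Λ-linear map satisfying j_k ∘ λ_k + θ_k ∘ f_k = id_{BX_k} and g_k ∘ λ_k = 0. Then λ_k restricts to an isomorphism of Λ-modules ker f_k → ker g_k, whose inverse is the restriction of j_k. (Kernel isomorphism established in the proof of Proposition 4.4 of the paper.) -/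
open Function

/-- Proof of Proposition 4.4: `λ` restricts to an isomorphism `ker f_k ≅ ker g_k`,
whose inverse is the restriction of `j`. -/
theorem homology_kernel_isomorphism
    (Λ : Type*) [CommRing Λ]
    (U BX BY CX CY : ℤ → Type*)
    [∀ k, AddCommGroup (U k)] [∀ k, Module Λ (U k)]
    [∀ k, AddCommGroup (BX k)] [∀ k, Module Λ (BX k)]
    [∀ k, AddCommGroup (BY k)] [∀ k, Module Λ (BY k)]
    [∀ k, AddCommGroup (CX k)] [∀ k, Module Λ (CX k)]
    [∀ k, AddCommGroup (CY k)] [∀ k, Module Λ (CY k)]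
    (dX : ∀ k, U (k+1) →ₗ[Λ] CX k) (j : ∀ k, CX k →ₗ[Λ] BX k) (sX : ∀ k, BX k →ₗ[Λ] U k)
    (dY : ∀ k, U (k+1) →ₗ[Λ] CY k) (i : ∀ k, CY k →ₗ[Λ] BY k) (sY : ∀ k, BY k →ₗ[Λ] U k)
    (hXex₁ : ∀ k, Function.Exact (dX k) (j k))
    (hXex₂ : ∀ k, Function.Exact (j k) (sX k))
    (hXex₃ : ∀ k, Function.Exact (sX (k+1)) (dX k))
    (hYex₁ : ∀ k, Function.Exact (dY k) (i k))
    (hYex₂ : ∀ k, Function.Exact (i k) (sY k))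
    (hYex₃ : ∀ k, Function.Exact (sY (k+1)) (dY k))
    (g : ∀ k, CX k →ₗ[Λ] CY k) (f : ∀ k, BX k →ₗ[Λ] BY k)
    (hgd : ∀ k, (g k).comp (dX k) = dY k)
    (hig : ∀ k, (i k).comp (g k) = (f k).comp (j k))
    (hsf : ∀ k, (sY k).comp (f k) = sX k)
    (η : ∀ k, CY k →ₗ[Λ] CX k) (θ : ∀ k, BY k →ₗ[Λ] BX k)
    (hηd : ∀ k, (η k).comp (dY k) = dX k)
    (hjη : ∀ k, (j k).comp (η k) = (θ k).comp (i k))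
    (hsθ : ∀ k, (sX k).comp (θ k) = sY k)
    (hfθ : ∀ k, (f k).comp (θ k) = LinearMap.id)
    (hgη : ∀ k, (g k).comp (η k) = LinearMap.id)
    (k : ℤ)
    (lam : BX k →ₗ[Λ] CX k)
    (hlam₁ : (j k).comp lam + (θ k).comp (f k) = LinearMap.id)
    (hlam₂ : (g k).comp lam = 0) :
    (∀ x ∈ LinearMap.ker (f k), lam x ∈ LinearMap.ker (g k)) ∧
    (∀ w ∈ LinearMap.ker (g k), j k w ∈ LinearMap.ker (f k)) ∧
    (∀ x ∈ LinearMap.ker (f k), j k (lam x) = x) ∧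
    (∀ w ∈ LinearMap.ker (g k), lam (j k w) = w) := by
  have hjlam : ∀ x : BX k, j k (lam x) + θ k (f k x) = x := fun x =>
    congrArg (fun φ : BX k →ₗ[Λ] BX k => φ x) hlam₁
  have hglam : ∀ x : BX k, g k (lam x) = 0 := fun x =>
    congrArg (fun φ : BX k →ₗ[Λ] CY k => φ x) hlam₂
  have hfj : ∀ c : CX k, f k (j k c) = i k (g k c) := fun c =>
    (congrArg (fun φ : CX k →ₗ[Λ] BY k => φ c) (hig k)).symm
  refine ⟨fun x hx => hglam x, ?_, ?_, ?_⟩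
  · intro w hw
    simp only [LinearMap.mem_ker] at hw ⊢
    rw [hfj, hw, map_zero]
  · intro x hx
    simp only [LinearMap.mem_ker] at hx
    have := hjlam x
    rw [hx, map_zero, add_zero] at this
    exact this
  · intro w hw
    simp only [LinearMap.mem_ker] at hw
    have hfjw : f k (j k w) = 0 := by rw [hfj, hw, map_zero]
    have h1 : j k (lam (j k w) - w) = 0 := by
      have := hjlam (j k w)
      rw [hfjw, map_zero, add_zero] at this
      rw [map_sub, this, sub_self]
    obtain ⟨u, hu⟩ := (hXex₁ k (lam (j k w) - w)).mp h1
    have hdYu : dY k u = 0 := by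
      have hgd' : g k (dX k u) = dY k u :=
        congrArg (fun φ : U (k+1) →ₗ[Λ] CY k => φ u) (hgd k)
      rw [← hgd', hu, map_sub, hglam, hw, sub_zero]
    obtain ⟨v, hv⟩ := (hYex₃ k u).mp hdYu
    have hsXv : sX (k+1) (θ (k+1) v) = u := by
      have := congrArg (fun φ : BY (k+1) →ₗ[Λ] U (k+1) => φ v) (hsθ (k+1))
      simp only [LinearMap.comp_apply] at this
      rw [this, hv]
    have hdXu : dX k u = 0 :=
      (hXex₃ k u).mpr ⟨θ (k+1) v, hsXv⟩
    have : lam (j k w) - w = 0 := by rw [← hu, hdXu]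
    exact sub_eq_zero.mp this
end
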